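/- arXiv:1608.06868 — 7 statements merged into one kernel-verified Lean document; each statement's English description precedes it below -/
import Mathlib

section
/- Let n ≥ 2 be squarefree with smallest prime factor P₁(n), let ζ = exp(2πi/n), and let r < P₁(n). If two sets {i₁,…,i_r} and {j₁,…,j_r} of exponents in {0,…,n−1}, each of size r, satisfy ζ^{i₁} + ⋯ + ζ^{i_r} = ζ^{j₁} + ⋯ + ζ^{j_r}, then the two sets are equal. -/
open Polynomial Finset

lemma span_powers_eq (d : ℕ) (hd : 0 < d) (χ : ℂ) (hχ : IsPrimitiveRoot χ d) :
    Submodule.span ℚ (((Finset.range d).image (fun t => χ ^ t) : Finset ℂ) : Set ℂ)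
      = Subalgebra.toSubmodule (Algebra.adjoin ℚ ({χ} : Set ℂ)) := by
  apply le_antisymm
  · rw [Submodule.span_le]
    intro y hy
    simp only [Finset.coe_image, Set.mem_image] at hy
    obtain ⟨t, _, rfl⟩ := hy
    exact Subalgebra.pow_mem _ (Algebra.self_mem_adjoin_singleton ℚ χ) t
  · intro y hy
    rw [Algebra.adjoin_singleton_eq_range_aeval] at hy
    obtain ⟨f, rfl⟩ := (Polynomial.aeval χ).mem_range.mp hy
    rw [Polynomial.aeval_eq_sum_range]
    apply Submodule.sum_mem
    intro i _
    apply Submodule.smul_mem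
    apply Submodule.subset_span
    simp only [Finset.coe_image, Set.mem_image, Finset.mem_coe, Finset.mem_range]
    refine ⟨i % d, Nat.mod_lt _ hd, ?_⟩
    conv_rhs => rw [← Nat.div_add_mod i d, pow_add, pow_mul, hχ.pow_eq_one, one_pow, one_mul]

lemma finrank_span_powers (d : ℕ) (hd : 0 < d) (χ : ℂ) (hχ : IsPrimitiveRoot χ d) :
    Module.finrank ℚ (Submodule.span ℚ
      (((Finset.range d).image (fun t => χ ^ t) : Finset ℂ) : Set ℂ)) = d.totient := by
  have hint : IsIntegral ℚ χ := by
    refine ⟨X ^ d - 1, monic_X_pow_sub_C 1 hd.ne', ?_⟩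
    simp [hχ.pow_eq_one]
  rw [span_powers_eq d hd χ hχ, Subalgebra.finrank_toSubmodule,
    (Algebra.adjoin.powerBasis hint).finrank, Algebra.adjoin.powerBasis_dim,
    ← Polynomial.cyclotomic_eq_minpoly_rat hχ hd, Polynomial.natDegree_cyclotomic]

lemma const_of_rel (p m : ℕ) (hp : p.Prime) (hm : 0 < m) (hco : Nat.Coprime p m)
    (ω ξ : ℂ) (hω : IsPrimitiveRoot ω p) (hξ : IsPrimitiveRoot ξ m)
    (g : ℕ → ℂ)
    (hgK : ∀ s, s < p → g s ∈ Submodule.span ℚ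
      (((Finset.range m).image (fun t => ξ ^ t) : Finset ℂ) : Set ℂ))
    (hrel : ∑ s ∈ Finset.range p, g s * ω ^ s = 0) :
    ∀ s, s < p → ∀ s', s' < p → g s = g s' := by
  classical
  set K : Submodule ℚ ℂ :=
    Submodule.span ℚ (((Finset.range m).image (fun t => ξ ^ t) : Finset ℂ) : Set ℂ) with hK
  have hη : IsPrimitiveRoot (ω * ξ) (p * m) := by
    have h1 : orderOf (ω * ξ) = p * m := by
      rw [(Commute.all ω ξ).orderOf_mul_eq_mul_orderOf_of_coprime
        (by rw [← hω.eq_orderOf, ← hξ.eq_orderOf]; exact hco),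
        ← hω.eq_orderOf, ← hξ.eq_orderOf]
    exact h1 ▸ IsPrimitiveRoot.orderOf _
  -- the linear map
  let Φ : (Fin p → K) →ₗ[ℚ] ℂ :=
    { toFun := fun v => ∑ s : Fin p, (v s : ℂ) * ω ^ (s : ℕ)
      map_add' := by
        intro v w
        rw [← Finset.sum_add_distrib]
        refine Finset.sum_congr rfl fun s _ => ?_
        simp only [Pi.add_apply, Submodule.coe_add]
        ring
      map_smul' := by
        intro q v
        show ∑ s : Fin p, ((q • v) s : ℂ) * ω ^ (s : ℕ)
            = q • ∑ s : Fin p, ((v s : ℂ) * ω ^ (s : ℕ))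
        rw [Finset.smul_sum]
        refine Finset.sum_congr rfl fun s _ => ?_
        simp only [Pi.smul_apply, SetLike.val_smul, Rat.smul_def, smul_eq_mul]
        ring }
  -- constants are in the kernel
  let c : K →ₗ[ℚ] (Fin p → K) :=
    { toFun := fun x => fun _ => x
      map_add' := fun _ _ => rfl
      map_smul' := fun _ _ => rfl }
  have hckerle : LinearMap.range c ≤ LinearMap.ker Φ := by
    rintro v ⟨x, rfl⟩
    simp only [LinearMap.mem_ker, Φ, c, LinearMap.coe_mk, AddHom.coe_mk]
    rw [← Finset.mul_sum, Fin.sum_univ_eq_sum_range (fun i => ω ^ i),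
      hω.geom_sum_eq_zero hp.one_lt, mul_zero]
  -- range Φ contains the span of powers of ω*ξ
  have hVle : Submodule.span ℚ
      (((Finset.range (p * m)).image (fun k => (ω * ξ) ^ k) : Finset ℂ) : Set ℂ)
      ≤ LinearMap.range Φ := by
    rw [Submodule.span_le]
    intro y hy
    simp only [Finset.coe_image, Set.mem_image, Finset.mem_coe, Finset.mem_range] at hy
    obtain ⟨k, hk, rfl⟩ := hy
    have hmem : ξ ^ (k % m) ∈ K := by
      apply Submodule.subset_span
      simp only [Finset.coe_image, Set.mem_image, Finset.mem_coe, Finset.mem_range]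
      exact ⟨k % m, Nat.mod_lt _ hm, rfl⟩
    refine ⟨Pi.single (⟨k % p, Nat.mod_lt _ hp.pos⟩ : Fin p) (⟨ξ ^ (k % m), hmem⟩ : K), ?_⟩
    simp only [Φ, LinearMap.coe_mk, AddHom.coe_mk]
    rw [Finset.sum_eq_single_of_mem (⟨k % p, Nat.mod_lt _ hp.pos⟩ : Fin p)
      (Finset.mem_univ _) (by
        intro s _ hs
        rw [Pi.single_eq_of_ne hs]
        simp)]
    rw [Pi.single_eq_same]
    have h1 : ω ^ (k % p) = ω ^ k := by rw [hω.eq_orderOf]; exact pow_mod_orderOf ω k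
    have h2 : ξ ^ (k % m) = ξ ^ k := by rw [hξ.eq_orderOf]; exact pow_mod_orderOf ξ k
    show ξ ^ (k % m) * ω ^ (k % p) = (ω * ξ) ^ k
    rw [h1, h2, mul_pow]; ring
  -- dimension count
  haveI : FiniteDimensional ℚ K := FiniteDimensional.span_finset ℚ _
  have hKrank : Module.finrank ℚ K = m.totient := finrank_span_powers m hm ξ hξ
  have hdom : Module.finrank ℚ (Fin p → K) = p * m.totient := by
    rw [Module.finrank_pi_fintype ℚ]
    simp [hKrank, Finset.sum_const, Finset.card_univ, mul_comm]
  have hrn := LinearMap.finrank_range_add_finrank_ker Φ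
  have hrange : (p * m).totient ≤ Module.finrank ℚ (LinearMap.range Φ) := by
    rw [← finrank_span_powers (p * m) (Nat.mul_pos hp.pos hm) _ hη]
    exact Submodule.finrank_mono hVle
  have htot : (p * m).totient = (p - 1) * m.totient := by
    rw [Nat.totient_mul hco, Nat.totient_prime hp]
  have hker : Module.finrank ℚ (LinearMap.ker Φ) ≤ m.totient := by
    rw [hdom] at hrn
    rw [htot] at hrange
    have hps : (p - 1) * m.totient = p * m.totient - m.totient := Nat.sub_one_mul p m.totient
    have hCle : m.totient ≤ p * m.totient := Nat.le_mul_of_pos_left _ hp.pos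
    omega
  have hcinj : Function.Injective c := by
    intro x y h
    exact congrFun h (⟨0, hp.pos⟩ : Fin p)
  have hkereq : LinearMap.range c = LinearMap.ker Φ := by
    apply Submodule.eq_of_le_of_finrank_le hckerle
    rw [LinearMap.finrank_range_of_inj hcinj, hKrank]
    exact hker
  -- conclude
  intro s hs s' hs'
  set v : Fin p → K := fun i => ⟨g i, hgK i i.isLt⟩ with hv
  have hvker : v ∈ LinearMap.ker Φ := by
    rw [LinearMap.mem_ker]
    show ∑ i : Fin p, (g (i : ℕ)) * ω ^ (i : ℕ) = 0
    rw [Fin.sum_univ_eq_sum_range (fun i => g i * ω ^ i)]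
    exact hrel
  rw [← hkereq] at hvker
  obtain ⟨x, hx⟩ := hvker
  have h1 : v ⟨s, hs⟩ = x := (congrFun hx ⟨s, hs⟩).symm
  have h2 : v ⟨s', hs'⟩ = x := (congrFun hx ⟨s', hs'⟩).symm
  have := h1.trans h2.symm
  exact congrArg Subtype.val this

lemma sum_eq_one_exists (f : ℕ → ℕ) (s : Finset ℕ) (h : ∑ t ∈ s, f t = 1) :
    ∃ t₁ ∈ s, f t₁ = 1 ∧ ∀ t ∈ s, t ≠ t₁ → f t = 0 := by
  obtain ⟨t₁, ht₁, hne⟩ := Finset.exists_ne_zero_of_sum_ne_zero (h ▸ one_ne_zero)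
  have h1 : f t₁ ≤ 1 := h ▸ Finset.single_le_sum (fun i _ => Nat.zero_le _) ht₁
  have h2 : f t₁ = 1 := by omega
  refine ⟨t₁, ht₁, h2, fun t hts htne => ?_⟩
  have h3 : ∑ t' ∈ s.erase t₁, f t' = 0 := by
    have := Finset.add_sum_erase s f ht₁
    omega
  exact Finset.sum_eq_zero_iff.mp h3 t (Finset.mem_erase.mpr ⟨htne, hts⟩)

/-- the coefficient of the class `(s,t)` -/
def classCoeff (n p m : ℕ) (f : ℕ → ℕ) (s t : ℕ) : ℕ :=
  ∑ k ∈ (Finset.range n).filter (fun k => (k % p, k % m) = (s, t)), f k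

lemma case_two (p m : ℕ) (hm : 0 < m) (ξ : ℂ)
    (IHm : ∀ A' B' : ℕ → ℕ, (∑ t ∈ Finset.range m, A' t ≤ p) →
      (∑ t ∈ Finset.range m, B' t ≤ p) →
      (∑ t ∈ Finset.range m, (A' t : ℂ) * ξ ^ t = ∑ t ∈ Finset.range m, (B' t : ℂ) * ξ ^ t) →
      ∀ t, t < m → A' t = B' t)
    (A B : ℕ → ℕ → ℕ)
    (hWa : ∑ s ∈ Finset.range p, ∑ t ∈ Finset.range m, A s t < p)
    (hWb : ∀ s, s < p → ∑ t ∈ Finset.range m, B s t ≤ p - 1)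
    (hconst : ∀ s, s < p → ∀ s', s' < p →
      (∑ t ∈ Finset.range m, (A s t : ℂ) * ξ ^ t) - (∑ t ∈ Finset.range m, (B s t : ℂ) * ξ ^ t)
      = (∑ t ∈ Finset.range m, (A s' t : ℂ) * ξ ^ t)
        - (∑ t ∈ Finset.range m, (B s' t : ℂ) * ξ ^ t))
    (s₁ : ℕ) (hs₁ : s₁ < p)
    (hα : ∑ t ∈ Finset.range m, A s₁ t = 1) (hβ : ∑ t ∈ Finset.range m, B s₁ t = 0) :
    False := by
  obtain ⟨t₁, ht₁m, ht₁1, ht₁0⟩ := sum_eq_one_exists (A s₁) (Finset.range m) hα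
  have hXs₁ : ∑ t ∈ Finset.range m, (A s₁ t : ℂ) * ξ ^ t = ξ ^ t₁ := by
    rw [Finset.sum_eq_single_of_mem t₁ ht₁m (fun t htm hne => by rw [ht₁0 t htm hne]; simp),
      ht₁1]
    simp
  have hYs₁ : ∑ t ∈ Finset.range m, (B s₁ t : ℂ) * ξ ^ t = 0 := by
    refine Finset.sum_eq_zero fun t htm => ?_
    rw [Finset.sum_eq_zero_iff.mp hβ t htm]
    simp
  have hp0 : 0 < p := lt_of_le_of_lt (Nat.zero_le _) hs₁
  have hone : ∑ t ∈ Finset.range m, (if t = t₁ then (1:ℂ) else 0) * ξ ^ t = ξ ^ t₁ := by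
    rw [show (fun t => (if t = t₁ then (1:ℂ) else 0) * ξ ^ t)
        = fun t => if t = t₁ then ξ ^ t else 0 from funext fun t => by split <;> simp]
    rw [Finset.sum_ite_eq' (Finset.range m) t₁ (fun t => ξ ^ t), if_pos ht₁m]
  have hkey : ∀ s, s < p → 1 ≤ A s t₁ := by
    intro s hs
    have h1 := hconst s hs s₁ hs₁
    rw [hXs₁, hYs₁, sub_zero] at h1
    have h3 : ∑ t ∈ Finset.range m, (A s t : ℂ) * ξ ^ t
        = ∑ t ∈ Finset.range m, (B s t : ℂ) * ξ ^ t + ξ ^ t₁ := by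
      rw [← h1]; ring
    have h2 : ∑ t ∈ Finset.range m, (A s t : ℂ) * ξ ^ t
        = ∑ t ∈ Finset.range m, ((fun t => B s t + if t = t₁ then 1 else 0) t : ℂ) * ξ ^ t := by
      rw [h3, ← hone, ← Finset.sum_add_distrib]
      refine Finset.sum_congr rfl fun t _ => ?_
      simp only [apply_ite (Nat.cast : ℕ → ℂ), Nat.cast_add, Nat.cast_one, Nat.cast_zero]
      ring
    have hbnd1 : ∑ t ∈ Finset.range m, A s t ≤ p := by
      refine le_trans ?_ hWa.le
      exact Finset.single_le_sum (f := fun s' => ∑ t ∈ Finset.range m, A s' t)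
        (fun _ _ => Nat.zero_le _) (Finset.mem_range.mpr hs)
    have hbnd2 : ∑ t ∈ Finset.range m, (B s t + if t = t₁ then 1 else 0) ≤ p := by
      rw [Finset.sum_add_distrib]
      have he1 : ∑ t ∈ Finset.range m, (if t = t₁ then 1 else 0)
          = if t₁ ∈ Finset.range m then 1 else 0 :=
        Finset.sum_ite_eq' (Finset.range m) t₁ (fun _ => 1)
      rw [if_pos ht₁m] at he1
      have := hWb s hs
      omega
    have h4 := IHm (A s) (fun t => B s t + if t = t₁ then 1 else 0) hbnd1 hbnd2 h2 t₁
      (Finset.mem_range.mp ht₁m)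
    have h5 : A s t₁ = B s t₁ + 1 := by simpa using h4
    omega
  have hge : p ≤ ∑ s ∈ Finset.range p, ∑ t ∈ Finset.range m, A s t := by
    calc p = ∑ _s ∈ Finset.range p, 1 := by simp
    _ ≤ _ := Finset.sum_le_sum fun s hs => le_trans (hkey s (Finset.mem_range.mp hs))
        (Finset.single_le_sum (fun t _ => Nat.zero_le _) ht₁m)
  omega

lemma key (n : ℕ) : Squarefree n → ∀ ζ : ℂ, IsPrimitiveRoot ζ n → ∀ a b : ℕ → ℕ,
    (n ≠ 1 → (∑ k ∈ Finset.range n, a k) < n.minFac) →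
    (n ≠ 1 → (∑ k ∈ Finset.range n, b k) < n.minFac) →
    (∑ k ∈ Finset.range n, (a k : ℂ) * ζ ^ k) = (∑ k ∈ Finset.range n, (b k : ℂ) * ζ ^ k) →
    ∀ k, k < n → a k = b k := by
  induction n using Nat.strong_induction_on with
  | _ n IH =>
  intro hsf ζ hζ a b ha hb hab k hk
  rcases eq_or_ne n 1 with rfl | hn1
  · have hk0 : k = 0 := by omega
    subst hk0
    simp only [Finset.range_one, Finset.sum_singleton, pow_zero, mul_one] at hab
    exact_mod_cast hab
  have hn0 : n ≠ 0 := hsf.ne_zero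
  have hnpos : 0 < n := Nat.pos_of_ne_zero hn0
  set p := n.minFac with hpdef
  have hp : p.Prime := Nat.minFac_prime hn1
  have hppos : 0 < p := hp.pos
  set m := n / p with hmdef
  have hpm : n = p * m := by rw [hmdef]; exact (Nat.mul_div_cancel' n.minFac_dvd).symm
  have hmpos : 0 < m := Nat.div_pos (Nat.minFac_le hnpos) hppos
  have hmn : m < n := Nat.div_lt_self hnpos hp.one_lt
  have hco : p.Coprime m := by
    have h := hsf; rw [hpm] at h; exact (Nat.squarefree_mul_iff.mp h).1
  have hsm : Squarefree m := by
    have h := hsf; rw [hpm] at h; exact (Nat.squarefree_mul_iff.mp h).2.2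
  have hpltm : m ≠ 1 → p < m.minFac := by
    intro hm1
    have h1 : p ≤ m.minFac := by
      apply Nat.minFac_le_of_dvd (m.minFac_prime hm1).two_le
      exact m.minFac_dvd.trans ⟨p, by rw [hpm]; ring⟩
    have h2 : p ≠ m.minFac := by
      intro he
      have hd : p ∣ m := he ▸ m.minFac_dvd
      have := Nat.Coprime.eq_one_of_dvd hco hd
      exact hp.one_lt.ne' this
    omega
  haveI : NeZero p := ⟨hppos.ne'⟩
  haveI : NeZero m := ⟨hmpos.ne'⟩
  set m' := ((m : ZMod p)⁻¹).val with hm'def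
  set p' := ((p : ZMod m)⁻¹).val with hp'def
  have hmu : IsUnit ((m : ZMod p)) := (ZMod.isUnit_iff_coprime m p).mpr hco.symm
  have hpu : IsUnit ((p : ZMod m)) := (ZMod.isUnit_iff_coprime p m).mpr hco
  have hcastm' : ((m' : ℕ) : ZMod p) = (m : ZMod p)⁻¹ := ZMod.natCast_rightInverse _
  have hcastp' : ((p' : ℕ) : ZMod m) = (p : ZMod m)⁻¹ := ZMod.natCast_rightInverse _
  have hmm' : m * m' ≡ 1 [MOD p] := by
    rw [← ZMod.natCast_eq_natCast_iff]
    push_cast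
    rw [hcastm', ZMod.mul_inv_of_unit _ hmu]
  have hpp' : p * p' ≡ 1 [MOD m] := by
    rw [← ZMod.natCast_eq_natCast_iff]
    push_cast
    rw [hcastp', ZMod.mul_inv_of_unit _ hpu]
  have hcm'p : Nat.Coprime m' p := by
    refine (ZMod.isUnit_iff_coprime m' p).mp ?_
    rw [hcastm']
    exact IsUnit.of_mul_eq_one _ (by rw [mul_comm]; exact ZMod.mul_inv_of_unit _ hmu)
  have hcp'm : Nat.Coprime p' m := by
    refine (ZMod.isUnit_iff_coprime p' m).mp ?_
    rw [hcastp']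
    exact IsUnit.of_mul_eq_one _ (by rw [mul_comm]; exact ZMod.mul_inv_of_unit _ hpu)
  set ω := ζ ^ (m * m') with hωdef
  set ξ := ζ ^ (p * p') with hξdef
  have hωp : IsPrimitiveRoot ω p := by
    have h1 : IsPrimitiveRoot (ζ ^ m) p := hζ.pow hnpos (by rw [hpm]; ring)
    have h2 := h1.pow_of_coprime m' hcm'p
    rw [hωdef, pow_mul]
    exact h2
  have hξm : IsPrimitiveRoot ξ m := by
    have h1 : IsPrimitiveRoot (ζ ^ p) m := hζ.pow hnpos hpm
    have h2 := h1.pow_of_coprime p' hcp'm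
    rw [hξdef, pow_mul]
    exact h2
  have hωξ : ω * ξ = ζ := by
    rw [hωdef, hξdef, ← pow_add]
    have hmod : (m * m' + p * p') ≡ 1 [MOD n] := by
      rw [hpm, ← Nat.modEq_and_modEq_iff_modEq_mul hco]
      constructor
      · have h := Nat.ModEq.add hmm' ((Nat.modEq_zero_iff_dvd).mpr ⟨p', rfl⟩)
        simpa using Nat.ModEq.add hmm' ((Nat.modEq_zero_iff_dvd).mpr ⟨p', rfl⟩)
      · simpa using Nat.ModEq.add ((Nat.modEq_zero_iff_dvd).mpr ⟨m', rfl⟩) hpp'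
    have h := pow_mod_orderOf ζ (m * m' + p * p')
    rw [← hζ.eq_orderOf] at h
    rw [← h, hmod, Nat.mod_eq_of_lt (by omega), pow_one]
  have hζk : ∀ k' : ℕ, ζ ^ k' = ω ^ (k' % p) * ξ ^ (k' % m) := by
    intro k'
    rw [← hωξ, mul_pow]
    congr 1
    · have h := pow_mod_orderOf ω k'
      rw [← hωp.eq_orderOf] at h
      exact h.symm
    · have h := pow_mod_orderOf ξ k'
      rw [← hξm.eq_orderOf] at h
      exact h.symm
  have hmaps : ∀ k' ∈ Finset.range n, (k' % p, k' % m) ∈ Finset.range p ×ˢ Finset.range m := by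
    intro k' _
    rw [Finset.mem_product]
    exact ⟨Finset.mem_range.mpr (Nat.mod_lt _ hppos), Finset.mem_range.mpr (Nat.mod_lt _ hmpos)⟩
  have hdecomp : ∀ f : ℕ → ℕ, ∑ k' ∈ Finset.range n, (f k' : ℂ) * ζ ^ k'
      = ∑ s ∈ Finset.range p,
          (∑ t ∈ Finset.range m, (classCoeff n p m f s t : ℂ) * ξ ^ t) * ω ^ s := by
    intro f
    rw [← Finset.sum_fiberwise_of_maps_to hmaps (fun k' => (f k' : ℂ) * ζ ^ k'),
      Finset.sum_product]
    refine Finset.sum_congr rfl fun s hs => ?_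
    rw [Finset.sum_mul]
    refine Finset.sum_congr rfl fun t ht => ?_
    rw [classCoeff, Nat.cast_sum, Finset.sum_mul, Finset.sum_mul]
    refine Finset.sum_congr rfl fun k' hk' => ?_
    simp only [Finset.mem_filter, Prod.mk.injEq] at hk'
    rw [hζk k', hk'.2.1, hk'.2.2]
    ring
  have hweight : ∀ f : ℕ → ℕ,
      ∑ s ∈ Finset.range p, ∑ t ∈ Finset.range m, classCoeff n p m f s t
      = ∑ k' ∈ Finset.range n, f k' := by
    intro f
    rw [← Finset.sum_fiberwise_of_maps_to hmaps f, Finset.sum_product]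
    rfl
  have hsingle : ∀ f : ℕ → ℕ, ∀ k', k' < n →
      classCoeff n p m f (k' % p) (k' % m) = f k' := by
    intro f k' hk'
    rw [classCoeff]
    have hset : (Finset.range n).filter (fun j => (j % p, j % m) = (k' % p, k' % m)) = {k'} := by
      ext j
      simp only [Finset.mem_filter, Finset.mem_range, Finset.mem_singleton, Prod.mk.injEq]
      constructor
      · rintro ⟨hj, h1, h2⟩
        have hmod : j ≡ k' [MOD p * m] := (Nat.modEq_and_modEq_iff_modEq_mul hco).mp ⟨h1, h2⟩
        rw [← hpm] at hmod
        rwa [Nat.ModEq, Nat.mod_eq_of_lt hj, Nat.mod_eq_of_lt hk'] at hmod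
      · rintro rfl
        exact ⟨hk', rfl, rfl⟩
    rw [hset, Finset.sum_singleton]
  have hwa : ∑ k' ∈ Finset.range n, a k' < p := ha hn1
  have hwb : ∑ k' ∈ Finset.range n, b k' < p := hb hn1
  have IHm : ∀ A' B' : ℕ → ℕ, (∑ t ∈ Finset.range m, A' t ≤ p) →
      (∑ t ∈ Finset.range m, B' t ≤ p) →
      (∑ t ∈ Finset.range m, (A' t : ℂ) * ξ ^ t = ∑ t ∈ Finset.range m, (B' t : ℂ) * ξ ^ t) →
      ∀ t, t < m → A' t = B' t := by
    intro A' B' h1 h2 h3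
    exact IH m hmn hsm ξ hξm A' B' (fun hm1 => lt_of_le_of_lt h1 (hpltm hm1))
      (fun hm1 => lt_of_le_of_lt h2 (hpltm hm1)) h3
  set g : ℕ → ℂ := fun s => (∑ t ∈ Finset.range m, (classCoeff n p m a s t : ℂ) * ξ ^ t)
      - (∑ t ∈ Finset.range m, (classCoeff n p m b s t : ℂ) * ξ ^ t) with hgdef
  have hterm : ∀ (c t : ℕ), (c : ℂ) * ξ ^ t = (c : ℚ) • ξ ^ t := by
    intro c t
    rw [Rat.smul_def]
    norm_num
  have hgK : ∀ s, s < p → g s ∈ Submodule.span ℚ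
      (((Finset.range m).image (fun t => ξ ^ t) : Finset ℂ) : Set ℂ) := by
    intro s _
    have hmem : ∀ t ∈ Finset.range m,
        ξ ^ t ∈ (((Finset.range m).image (fun t => ξ ^ t) : Finset ℂ) : Set ℂ) := by
      intro t ht
      simp only [Finset.coe_image, Set.mem_image, Finset.mem_coe]
      exact ⟨t, ht, rfl⟩
    apply Submodule.sub_mem <;>
    · apply Submodule.sum_mem
      intro t ht
      rw [hterm]
      exact Submodule.smul_mem _ _ (Submodule.subset_span (hmem t ht))
  have hrel : ∑ s ∈ Finset.range p, g s * ω ^ s = 0 := by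
    calc ∑ s ∈ Finset.range p, g s * ω ^ s
        = ∑ s ∈ Finset.range p,
          ((∑ t ∈ Finset.range m, (classCoeff n p m a s t : ℂ) * ξ ^ t) * ω ^ s
            - (∑ t ∈ Finset.range m, (classCoeff n p m b s t : ℂ) * ξ ^ t) * ω ^ s) :=
          Finset.sum_congr rfl fun s _ => by rw [hgdef]; ring
      _ = 0 := by
          rw [Finset.sum_sub_distrib, ← hdecomp a, ← hdecomp b, hab, sub_self]
  have hconst := const_of_rel p m hp hmpos hco ω ξ hωp hξm g hgK hrel
  by_cases hcase : ∃ s ∈ Finset.range p, (∑ t ∈ Finset.range m, classCoeff n p m a s t = 0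
      ∧ ∑ t ∈ Finset.range m, classCoeff n p m b s t = 0)
  · obtain ⟨s₀, hs₀, hA0, hB0⟩ := hcase
    have hg0 : g s₀ = 0 := by
      rw [hgdef]
      have e1 : ∑ t ∈ Finset.range m, (classCoeff n p m a s₀ t : ℂ) * ξ ^ t = 0 :=
        Finset.sum_eq_zero fun t ht => by rw [Finset.sum_eq_zero_iff.mp hA0 t ht]; simp
      have e2 : ∑ t ∈ Finset.range m, (classCoeff n p m b s₀ t : ℂ) * ξ ^ t = 0 :=
        Finset.sum_eq_zero fun t ht => by rw [Finset.sum_eq_zero_iff.mp hB0 t ht]; simp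
      simp [e1, e2]
    have hXY : ∀ s, s < p → ∑ t ∈ Finset.range m, (classCoeff n p m a s t : ℂ) * ξ ^ t
        = ∑ t ∈ Finset.range m, (classCoeff n p m b s t : ℂ) * ξ ^ t := by
      intro s hs
      have h := (hconst s hs s₀ (Finset.mem_range.mp hs₀)).trans hg0
      simp only [hgdef] at h
      exact sub_eq_zero.mp h
    have hs' : k % p < p := Nat.mod_lt _ hppos
    have ht' : k % m < m := Nat.mod_lt _ hmpos
    have hbnd1 : ∑ t ∈ Finset.range m, classCoeff n p m a (k % p) t ≤ p := by
      refine le_trans (Finset.single_le_sum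
        (f := fun s' => ∑ t ∈ Finset.range m, classCoeff n p m a s' t)
        (fun _ _ => Nat.zero_le _) (Finset.mem_range.mpr hs')) ?_
      rw [hweight a]; exact hwa.le
    have hbnd2 : ∑ t ∈ Finset.range m, classCoeff n p m b (k % p) t ≤ p := by
      refine le_trans (Finset.single_le_sum
        (f := fun s' => ∑ t ∈ Finset.range m, classCoeff n p m b s' t)
        (fun _ _ => Nat.zero_le _) (Finset.mem_range.mpr hs')) ?_
      rw [hweight b]; exact hwb.le
    have hfin := IHm _ _ hbnd1 hbnd2 (hXY _ hs') (k % m) ht'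
    rwa [hsingle a k hk, hsingle b k hk] at hfin
  · push_neg at hcase
    exfalso
    have h1 : ∀ s ∈ Finset.range p, 1 ≤ ∑ t ∈ Finset.range m, classCoeff n p m a s t
        + ∑ t ∈ Finset.range m, classCoeff n p m b s t := by
      intro s hs
      rcases Nat.eq_zero_or_pos (∑ t ∈ Finset.range m, classCoeff n p m a s t) with h | h
      · have := hcase s hs h; omega
      · omega
    have h2 : ∃ s₁ ∈ Finset.range p, ∑ t ∈ Finset.range m, classCoeff n p m a s₁ t
        + ∑ t ∈ Finset.range m, classCoeff n p m b s₁ t = 1 := by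
      by_contra hno
      push_neg at hno
      have h3 : ∀ s ∈ Finset.range p, 2 ≤ ∑ t ∈ Finset.range m, classCoeff n p m a s t
          + ∑ t ∈ Finset.range m, classCoeff n p m b s t := by
        intro s hs
        have := h1 s hs; have := hno s hs; omega
      have h4 : 2 * p ≤ ∑ s ∈ Finset.range p, (∑ t ∈ Finset.range m, classCoeff n p m a s t
          + ∑ t ∈ Finset.range m, classCoeff n p m b s t) := by
        calc 2 * p = ∑ _s ∈ Finset.range p, 2 := by simp [mul_comm]
        _ ≤ _ := Finset.sum_le_sum h3
      rw [Finset.sum_add_distrib, hweight a, hweight b] at h4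
      omega
    obtain ⟨s₁, hs₁p, hsum1⟩ := h2
    have hs₁ := Finset.mem_range.mp hs₁p
    have hWa' : ∑ s ∈ Finset.range p, ∑ t ∈ Finset.range m, classCoeff n p m a s t < p := by
      rw [hweight a]; exact hwa
    have hWb' : ∑ s ∈ Finset.range p, ∑ t ∈ Finset.range m, classCoeff n p m b s t < p := by
      rw [hweight b]; exact hwb
    have hWbbound : ∀ s, s < p → ∑ t ∈ Finset.range m, classCoeff n p m b s t ≤ p - 1 := by
      intro s hs
      have h : ∑ t ∈ Finset.range m, classCoeff n p m b s t
          ≤ ∑ s' ∈ Finset.range p, ∑ t ∈ Finset.range m, classCoeff n p m b s' t :=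
        Finset.single_le_sum (f := fun s' => ∑ t ∈ Finset.range m, classCoeff n p m b s' t)
          (fun _ _ => Nat.zero_le _) (Finset.mem_range.mpr hs)
      omega
    have hWabound : ∀ s, s < p → ∑ t ∈ Finset.range m, classCoeff n p m a s t ≤ p - 1 := by
      intro s hs
      have h : ∑ t ∈ Finset.range m, classCoeff n p m a s t
          ≤ ∑ s' ∈ Finset.range p, ∑ t ∈ Finset.range m, classCoeff n p m a s' t :=
        Finset.single_le_sum (f := fun s' => ∑ t ∈ Finset.range m, classCoeff n p m a s' t)
          (fun _ _ => Nat.zero_le _) (Finset.mem_range.mpr hs)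
      omega
    rcases (show (∑ t ∈ Finset.range m, classCoeff n p m a s₁ t = 1
          ∧ ∑ t ∈ Finset.range m, classCoeff n p m b s₁ t = 0)
        ∨ (∑ t ∈ Finset.range m, classCoeff n p m a s₁ t = 0
          ∧ ∑ t ∈ Finset.range m, classCoeff n p m b s₁ t = 1) from by omega)
      with ⟨hα, hβ⟩ | ⟨hα, hβ⟩
    · exact case_two p m hmpos ξ IHm (classCoeff n p m a) (classCoeff n p m b) hWa' hWbbound
        (fun s hs s' hs' => by have h := hconst s hs s' hs'; simpa [hgdef] using h)
        s₁ hs₁ hα hβ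
    · refine case_two p m hmpos ξ IHm (classCoeff n p m b) (classCoeff n p m a) hWb' hWabound
        (fun s hs s' hs' => ?_) s₁ hs₁ hβ hα
      have h := hconst s hs s' hs'
      simp only [hgdef] at h
      linear_combination -h

theorem equal_sums_squarefree_roots_of_unity (n r : ℕ) (hn : 2 ≤ n) (hsf : Squarefree n)
    (hr : r < n.minFac)
    (ζ : ℂ) (hζ : ζ = Complex.exp (2 * Real.pi * Complex.I / n))
    (S T : Finset ℕ) (hS : S ⊆ Finset.range n) (hT : T ⊆ Finset.range n)
    (hScard : S.card = r) (hTcard : T.card = r)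
    (hsum : ∑ k ∈ S, ζ ^ k = ∑ k ∈ T, ζ ^ k) :
    S = T := by
  classical
  have hn0 : n ≠ 0 := by omega
  have hζp : IsPrimitiveRoot ζ n := by
    rw [hζ]
    exact Complex.isPrimitiveRoot_exp n hn0
  set a : ℕ → ℕ := fun k => if k ∈ S then 1 else 0 with hadef
  set b : ℕ → ℕ := fun k => if k ∈ T then 1 else 0 with hbdef
  have hsum' : ∀ (U : Finset ℕ), U ⊆ Finset.range n →
      ∑ k ∈ Finset.range n, ((if k ∈ U then 1 else 0 : ℕ) : ℂ) * ζ ^ k = ∑ k ∈ U, ζ ^ k := by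
    intro U hU
    rw [show (fun k => ((if k ∈ U then 1 else 0 : ℕ) : ℂ) * ζ ^ k)
        = fun k => if k ∈ U then ζ ^ k else 0 from funext fun k => by split <;> simp]
    rw [Finset.sum_ite_mem, Finset.inter_eq_right.mpr hU]
  have hw : ∀ (U : Finset ℕ), U ⊆ Finset.range n →
      ∑ k ∈ Finset.range n, (if k ∈ U then 1 else 0) = U.card := by
    intro U hU
    rw [Finset.sum_ite_mem, Finset.inter_eq_right.mpr hU]
    simp
  have hkey := key n hsf ζ hζp a b
    (fun _ => by rw [hadef, hw S hS, hScard]; exact hr)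
    (fun _ => by rw [hbdef, hw T hT, hTcard]; exact hr)
    (by rw [hadef, hbdef, hsum' S hS, hsum' T hT]; exact hsum)
  ext k
  by_cases hk : k < n
  · have h := hkey k hk
    simp only [hadef, hbdef] at h
    by_cases h1 : k ∈ S <;> by_cases h2 : k ∈ T <;> simp [h1, h2] at h ⊢
  · constructor
    · intro hks; exact absurd (Finset.mem_range.mp (hS hks)) hk
    · intro hkt; exact absurd (Finset.mem_range.mp (hT hkt)) hk
end

section
/- Let z₁,…,z_r be roots of unity and a₁,…,a_r positive integers with a₁z₁ + ⋯ + a_r z_r = 0, and suppose no proper nonempty subsum vanishes. Then for all i, j, (z_i/z_j)^m = 1, where m is the product of all primes p ≤ r. -/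
open IntermediateField Polynomial Finset

set_option maxHeartbeats 1000000
set_option synthInstance.maxHeartbeats 400000

namespace MannProof


lemma aux_aeval (K : IntermediateField ℚ ℂ) (x : ℂ) (d : ℕ) (B : ℕ → K) :
    Polynomial.aeval x (∑ c ∈ range d, Polynomial.monomial c (B c) : Polynomial K)
      = ∑ c ∈ range d, (B c : ℂ) * x ^ c := by
  rw [map_sum]
  refine Finset.sum_congr rfl fun c _ => ?_
  rw [Polynomial.aeval_monomial]
  rfl

lemma aux_coeff (K : IntermediateField ℚ ℂ) (d : ℕ) (B : ℕ → K) (c : ℕ) (hc : c < d) :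
    (∑ e ∈ range d, Polynomial.monomial e (B e) : Polynomial K).coeff c = B c := by
  rw [finset_sum_coeff, Finset.sum_eq_single c]
  · simp
  · intro b _ hb; simp [Polynomial.coeff_monomial, hb]
  · intro h; exact absurd (mem_range.2 hc) h

lemma coeff_zero_of (K : IntermediateField ℚ ℂ) (x : ℂ)
    (d : ℕ) (hdeg : d ≤ (minpoly K x).natDegree) (B : ℕ → K)
    (hz : ∑ c ∈ range d, (B c : ℂ) * x ^ c = 0) : ∀ c < d, B c = 0 := by
  set g : Polynomial K := ∑ c ∈ range d, Polynomial.monomial c (B c) with hg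
  have hroot : Polynomial.aeval x g = 0 := by rw [hg, aux_aeval]; exact hz
  have hdvd : minpoly K x ∣ g := minpoly.dvd K x hroot
  have hg0 : g = 0 := by
    by_contra h
    rcases Nat.eq_zero_or_pos d with rfl | hd
    · simp [hg] at h
    have h1 : g.natDegree < d := by
      have h2 : g.natDegree ≤ d - 1 := by
        refine Polynomial.natDegree_sum_le_of_forall_le _ _ fun c hc => ?_
        exact le_trans (Polynomial.natDegree_monomial_le _) (by have := mem_range.1 hc; omega)
      omega
    exact absurd (Polynomial.natDegree_le_of_dvd hdvd h) (by omega)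
  intro c hc
  have := aux_coeff K d B c hc
  rw [← hg, hg0] at this; simpa using this.symm

lemma coeff_all_eq (K : IntermediateField ℚ ℂ) (x : ℂ) (p : ℕ) (hp : p.Prime)
    (hmin : minpoly K x = Polynomial.cyclotomic p K) (B : ℕ → K)
    (hz : ∑ c ∈ range p, (B c : ℂ) * x ^ c = 0) :
    ∀ c < p, ∀ c' < p, B c = B c' := by
  haveI : Fact p.Prime := ⟨hp⟩
  set g : Polynomial K := ∑ c ∈ range p, Polynomial.monomial c (B c) with hg
  have hroot : Polynomial.aeval x g = 0 := by rw [hg, aux_aeval]; exact hz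
  have hdvd : Polynomial.cyclotomic p K ∣ g := hmin ▸ minpoly.dvd K x hroot
  obtain ⟨h, hh⟩ := hdvd
  have hdegg : g.natDegree ≤ p - 1 := by
    refine Polynomial.natDegree_sum_le_of_forall_le _ _ fun c hc => ?_
    exact le_trans (Polynomial.natDegree_monomial_le _) (by have := mem_range.1 hc; omega)
  have hcyc_deg : (Polynomial.cyclotomic p K).natDegree = p - 1 := by
    rw [Polynomial.natDegree_cyclotomic, Nat.totient_prime hp]
  have hconst : ∃ A : K, h = Polynomial.C A := by
    rcases eq_or_ne h 0 with rfl | h0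
    · exact ⟨0, by simp⟩
    have hnd : (Polynomial.cyclotomic p K).natDegree + h.natDegree = g.natDegree := by
      rw [hh, Polynomial.natDegree_mul (Polynomial.cyclotomic_ne_zero p K) h0]
    have hd0 : h.natDegree = 0 := by have := hp.two_le; omega
    exact ⟨h.coeff 0, Polynomial.eq_C_of_natDegree_eq_zero hd0⟩
  obtain ⟨A, rfl⟩ := hconst
  have hcoe : ∀ c < p, B c = A := by
    intro c hc
    have h1 := aux_coeff K p B c hc
    rw [← hg, hh, Polynomial.cyclotomic_prime K p] at h1
    rw [← h1, Finset.sum_mul]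
    simp only [Polynomial.X_pow_mul_C]
    rw [finset_sum_coeff, Finset.sum_eq_single c]
    · simp
    · intro b _ hb
      rw [Polynomial.coeff_C_mul, Polynomial.coeff_X_pow, if_neg (fun h => hb h.symm), mul_zero]
    · intro habs; exact absurd (mem_range.2 hc) habs
  intro c hc c' hc'
  rw [hcoe c hc, hcoe c' hc']

set_option synthInstance.maxHeartbeats 400000 in
lemma deg_lemma (n q : ℕ) (hq : 0 < q) (hn : 0 < n) (ζq ζn x : ℂ)
    (hζq : IsPrimitiveRoot ζq q) (hζn : IsPrimitiveRoot ζn n)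
    (hx : IsIntegral ℚ x)
    (hEq : IntermediateField.restrictScalars ℚ
      (IntermediateField.adjoin ℚ⟮ζq⟯ {x}) = ℚ⟮ζn⟯) :
    q.totient * (minpoly ℚ⟮ζq⟯ x).natDegree = n.totient := by
  have hintq : IsIntegral ℚ ζq := (hζq.isIntegral hq).tower_top
  have hintn : IsIntegral ℚ ζn := (hζn.isIntegral hn).tower_top
  have hKfin : FiniteDimensional ℚ ℚ⟮ζq⟯ := adjoin.finiteDimensional hintq
  have hxK : IsIntegral ℚ⟮ζq⟯ x := hx.tower_top
  have h1 : Module.finrank ℚ ℚ⟮ζq⟯ = q.totient := by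
    rw [adjoin.finrank hintq, ← Polynomial.cyclotomic_eq_minpoly_rat hζq hq, natDegree_cyclotomic]
  have h2 : Module.finrank ℚ ℚ⟮ζn⟯ = n.totient := by
    rw [adjoin.finrank hintn, ← Polynomial.cyclotomic_eq_minpoly_rat hζn hn, natDegree_cyclotomic]
  have h3 : Module.finrank ℚ⟮ζq⟯ (IntermediateField.adjoin ℚ⟮ζq⟯ {x} : IntermediateField ℚ⟮ζq⟯ ℂ)
      = (minpoly ℚ⟮ζq⟯ x).natDegree := adjoin.finrank hxK
  haveI := adjoin.finiteDimensional hxK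
  have h4 := Module.finrank_mul_finrank ℚ ℚ⟮ζq⟯
      (IntermediateField.adjoin ℚ⟮ζq⟯ {x} : IntermediateField ℚ⟮ζq⟯ ℂ)
  have h5 : Module.finrank ℚ (IntermediateField.adjoin ℚ⟮ζq⟯ {x} : IntermediateField ℚ⟮ζq⟯ ℂ)
      = Module.finrank ℚ (IntermediateField.restrictScalars ℚ
        (IntermediateField.adjoin ℚ⟮ζq⟯ {x})) := rfl
  rw [h1, h3, h5, hEq, h2] at h4
  exact h4

lemma endgame {r q : ℕ} (hr : r ≠ 0) (θ : ℂ) (hθ : θ ≠ 0) (z u : Fin r → ℂ)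
    (c : Fin r → ℕ) (a : Fin r → ℕ)
    (hdec : ∀ i, z i = θ ^ c i * u i) (huq : ∀ i, u i ^ q = 1)
    (hvan : ∀ c0, ∑ i ∈ univ.filter (fun i => c i = c0), (a i : ℂ) * u i = 0)
    (hirr : ∀ S : Finset (Fin r), S.Nonempty → S ≠ Finset.univ →
      ∑ i ∈ S, (a i : ℂ) * z i ≠ 0) :
    ∃ w : ℂ, w ≠ 0 ∧ ∀ i, (w * z i) ^ q = 1 := by
  have hrpos : 0 < r := Nat.pos_of_ne_zero hr
  let i0 : Fin r := ⟨0, hrpos⟩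
  set S : Finset (Fin r) := univ.filter (fun i => c i = c i0) with hSdef
  have hS : ∑ i ∈ S, (a i : ℂ) * z i = 0 := by
    have : ∑ i ∈ S, (a i : ℂ) * z i = θ ^ c i0 * ∑ i ∈ S, (a i : ℂ) * u i := by
      rw [Finset.mul_sum]
      refine Finset.sum_congr rfl fun i hi => ?_
      have hci : c i = c i0 := (Finset.mem_filter.1 hi).2
      rw [hdec i, hci]; ring
    rw [this, hvan (c i0), mul_zero]
  have hSne : S.Nonempty := ⟨i0, by simp [hSdef]⟩
  have hSuniv : S = univ := by
    by_contra h
    exact hirr S hSne h hS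
  refine ⟨(θ ^ c i0)⁻¹, inv_ne_zero (pow_ne_zero _ hθ), fun i => ?_⟩
  have hci : c i = c i0 := by
    have : i ∈ S := hSuniv ▸ Finset.mem_univ i
    exact (Finset.mem_filter.1 this).2
  rw [hdec i, hci, ← mul_assoc, inv_mul_cancel₀ (pow_ne_zero _ hθ), one_mul]
  exact huq i


lemma descent {r n p : ℕ} (hn : 0 < n) (hp : p.Prime) (hpn : p ∣ n)
    (hcase : p * p ∣ n ∨ r < p)
    (z : Fin r → ℂ) (a : Fin r → ℕ)
    (hz : ∀ i, z i ^ n = 1)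
    (hsum : ∑ i, (a i : ℂ) * z i = 0)
    (hirr : ∀ S : Finset (Fin r), S.Nonempty → S ≠ Finset.univ →
      ∑ i ∈ S, (a i : ℂ) * z i ≠ 0) :
    ∃ w : ℂ, w ≠ 0 ∧ ∀ i, (w * z i) ^ (n / p) = 1 := by
  rcases eq_or_ne r 0 with rfl | hr
  · exact ⟨1, one_ne_zero, fun i => i.elim0⟩
  set q := n / p with hqdef
  have hnpq : n = p * q := (Nat.mul_div_cancel' hpn).symm
  have hq : 0 < q := Nat.div_pos (Nat.le_of_dvd hn hpn) hp.pos
  haveI : NeZero n := ⟨hn.ne'⟩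
  set ζ : ℂ := Complex.exp (2 * Real.pi * Complex.I / n) with hζdef
  have hζ : IsPrimitiveRoot ζ n := Complex.isPrimitiveRoot_exp n hn.ne'
  have hζ0 : ζ ≠ 0 := fun h => by simpa [h, zero_pow hn.ne'] using hζ.pow_eq_one
  have hdi : ∀ i, ∃ k, k < n ∧ ζ ^ k = z i := by
    intro i
    obtain ⟨k, hk, hke⟩ := hζ.eq_pow_of_pow_eq_one (hz i)
    exact ⟨k, hk, hke⟩
  choose d hdlt hdz using hdi
  have hζp : IsPrimitiveRoot (ζ ^ p) q := hζ.pow hn hnpq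
  have hmem : ζ ^ p ∈ ℚ⟮ζ ^ p⟯ := mem_adjoin_simple_self ℚ (ζ ^ p)
  set K : IntermediateField ℚ ℂ := ℚ⟮ζ ^ p⟯ with hKdef
  have hintζ : IsIntegral ℚ ζ := ((hζ.isIntegral hn).tower_top : IsIntegral ℚ ζ)
  by_cases hpp : p * p ∣ n
  -- Case A : p^2 ∣ n
  · have hpq : p ∣ q := by
      rcases hpp with ⟨k, hk⟩
      refine ⟨k, ?_⟩
      have : p * q = p * (p * k) := by rw [← hnpq, hk]; ring
      exact Nat.eq_of_mul_eq_mul_left hp.pos this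
    have hres : IntermediateField.restrictScalars ℚ (IntermediateField.adjoin K {ζ}) = ℚ⟮ζ⟯ := by
      refine (restrictScalars_adjoin_eq_sup ℚ K _).trans ?_
      exact sup_eq_right.2 (adjoin_simple_le_iff.2 (pow_mem (mem_adjoin_simple_self ℚ ζ) p))
    have hdeg := deg_lemma n q hq hn (ζ ^ p) ζ ζ hζp hζ hintζ hres
    have htot : n.totient = p * q.totient := by
      rw [hnpq, Nat.totient_mul_of_prime_of_dvd hp hpq]
    have hdegp : (minpoly K ζ).natDegree = p := by
      have h1 : q.totient * (minpoly K ζ).natDegree = q.totient * p := by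
        rw [hdeg, htot]; ring
      exact Nat.eq_of_mul_eq_mul_left (Nat.totient_pos.2 hq) h1
    set c : Fin r → ℕ := fun i => d i % p with hcdef
    set ut : Fin r → K := fun i => (⟨ζ ^ p, hmem⟩ : K) ^ (d i / p) with hutdef
    have hucoe : ∀ i, ((ut i : K) : ℂ) = (ζ ^ p) ^ (d i / p) := by
      intro i; rw [hutdef]; push_cast; ring
    have hdec : ∀ i, z i = ζ ^ c i * ((ut i : K) : ℂ) := by
      intro i
      rw [hucoe, ← hdz i, hcdef, ← pow_mul, ← pow_add]
      simp only []
      congr 1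
      exact ((Nat.mod_add_div (d i) p).symm)
    have huq : ∀ i, ((ut i : K) : ℂ) ^ q = 1 := by
      intro i
      rw [hucoe, ← pow_mul, ← pow_mul]
      exact (hζ.pow_eq_one_iff_dvd _).2 ⟨d i / p, by rw [hnpq]; ring⟩
    set B : ℕ → K := fun c0 => ∑ i ∈ univ.filter (fun i => c i = c0), (a i : K) * ut i with hBdef
    have hBcoe : ∀ c0, ((B c0 : K) : ℂ)
        = ∑ i ∈ univ.filter (fun i => c i = c0), (a i : ℂ) * ((ut i : K) : ℂ) := by
      intro c0
      simp only [hBdef, AddSubmonoidClass.coe_finset_sum]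
      refine Finset.sum_congr rfl fun i _ => ?_
      push_cast
      rfl
    have hzero : ∑ c0 ∈ range p, (B c0 : ℂ) * ζ ^ c0 = 0 := by
      rw [← hsum]
      rw [← Finset.sum_fiberwise_of_maps_to (g := c) (t := range p)
        (fun i _ => mem_range.2 (Nat.mod_lt _ hp.pos)) (fun i => (a i : ℂ) * z i)]
      refine Finset.sum_congr rfl fun c0 _ => ?_
      rw [hBcoe, Finset.sum_mul]
      refine Finset.sum_congr rfl fun i hi => ?_
      have hci : c i = c0 := (Finset.mem_filter.1 hi).2
      rw [hdec i, hci]; ring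
    have hB0 := coeff_zero_of K ζ p (le_of_eq hdegp.symm) B hzero
    have hvan : ∀ c0, ∑ i ∈ univ.filter (fun i => c i = c0), (a i : ℂ) * ((ut i : K) : ℂ) = 0 := by
      intro c0
      by_cases hc0 : c0 < p
      · rw [← hBcoe, hB0 c0 hc0]; rfl
      · rw [Finset.filter_false_of_mem, Finset.sum_empty]
        intro i _
        have : c i < p := Nat.mod_lt _ hp.pos
        omega
    exact endgame hr ζ hζ0 z (fun i => ((ut i : K) : ℂ)) c a hdec huq hvan hirr
  -- Case B : p ∤ q, r < p
  · have hrp : r < p := hcase.resolve_left hpp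
    have hpq : ¬ p ∣ q := fun h => hpp (by rw [hnpq]; exact mul_dvd_mul_left p h)
    have hcop : Nat.Coprime p q := (Nat.Prime.coprime_iff_not_dvd hp).2 hpq
    set ω : ℂ := ζ ^ q with hωdef
    have hω : IsPrimitiveRoot ω p := hζ.pow hn (by rw [hnpq]; ring)
    set s : ℤ := Int.gcdA p q with hsdef
    set t : ℤ := Int.gcdB p q with htdef
    have hbez : (1 : ℤ) = p * s + q * t := by
      have h := Int.gcd_eq_gcd_ab (p : ℤ) (q : ℤ)
      rw [Int.gcd_natCast_natCast, hcop] at h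
      exact_mod_cast h
    -- decomposition
    set c : Fin r → ℕ := fun i => (((d i : ℤ) * t) % p).toNat with hcdef
    have hcp : ∀ i, c i < p := by
      intro i
      have h0 : (0:ℤ) < p := by exact_mod_cast hp.pos
      have h1 := Int.emod_lt_of_pos ((d i : ℤ) * t) h0
      have h2 := Int.emod_nonneg ((d i : ℤ) * t) (show (p:ℤ) ≠ 0 by exact_mod_cast hp.pos.ne')
      have h3 : c i = (((d i : ℤ) * t) % p).toNat := by rw [hcdef]
      rw [h3]; omega
    set ut : Fin r → K := fun i => (⟨ζ ^ p, hmem⟩ : K) ^ ((d i : ℤ) * s) with hutdef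
    have hucoe : ∀ i, ((ut i : K) : ℂ) = (ζ ^ p) ^ ((d i : ℤ) * s) := by
      intro i; rw [hutdef]
      exact map_zpow₀ (algebraMap K ℂ) ⟨ζ ^ p, hmem⟩ ((d i : ℤ) * s)
    have hωpow : ∀ m : ℤ, ω ^ m = ω ^ ((m % p).toNat) := by
      intro m
      have hmn : (0:ℤ) ≤ m % p := Int.emod_nonneg m (by exact_mod_cast hp.pos.ne')
      calc ω ^ m = ω ^ ((p:ℤ) * (m / p) + m % p) := by rw [Int.mul_ediv_add_emod]
        _ = (ω ^ (p:ℤ)) ^ (m / p) * ω ^ (m % p) := by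
            rw [zpow_add₀ (hω.ne_zero hp.pos.ne'), zpow_mul]
        _ = ω ^ (m % p) := by
            rw [show ω ^ (p:ℤ) = 1 by rw [zpow_natCast, hω.pow_eq_one], one_zpow, one_mul]
        _ = ω ^ ((m % p).toNat) := by rw [← zpow_natCast, Int.toNat_of_nonneg hmn]
    have hdec : ∀ i, z i = ω ^ c i * ((ut i : K) : ℂ) := by
      intro i
      rw [hucoe, ← hdz i, hcdef]
      rw [← hωpow ((d i : ℤ) * t)]
      rw [hωdef, ← zpow_natCast ζ (d i)]
      rw [← zpow_natCast ζ q, ← zpow_natCast ζ p, ← zpow_mul, ← zpow_mul, ← zpow_add₀ hζ0]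
      congr 1
      linear_combination (d i : ℤ) * hbez
    have huq : ∀ i, ((ut i : K) : ℂ) ^ q = 1 := by
      intro i
      rw [hucoe, ← zpow_natCast ((ζ ^ p) ^ ((d i : ℤ) * s)) q, ← zpow_mul]
      rw [mul_comm ((d i : ℤ) * s) (q : ℤ), zpow_mul, zpow_natCast, ← pow_mul, ← hnpq,
        hζ.pow_eq_one, one_zpow]
    -- minpoly computation
    have hres : IntermediateField.restrictScalars ℚ (IntermediateField.adjoin K {ω}) = ℚ⟮ζ⟯ := by
      refine (restrictScalars_adjoin_eq_sup ℚ K _).trans ?_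
      apply le_antisymm
      · exact sup_le (adjoin_simple_le_iff.2 (pow_mem (mem_adjoin_simple_self ℚ ζ) p))
          (adjoin_simple_le_iff.2 (pow_mem (mem_adjoin_simple_self ℚ ζ) q))
      · rw [adjoin_simple_le_iff]
        have h1 : ζ ^ p ∈ K ⊔ ℚ⟮ω⟯ :=
          (le_sup_left : K ≤ K ⊔ ℚ⟮ω⟯) (mem_adjoin_simple_self ℚ (ζ ^ p))
        have h2 : ω ∈ K ⊔ ℚ⟮ω⟯ :=
          (le_sup_right : ℚ⟮ω⟯ ≤ K ⊔ ℚ⟮ω⟯) (mem_adjoin_simple_self ℚ ω)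
        have h3 : (ζ ^ p) ^ s * ω ^ t ∈ K ⊔ ℚ⟮ω⟯ :=
          mul_mem (zpow_mem h1 s) (zpow_mem h2 t)
        have h4 : ζ = (ζ ^ p) ^ s * ω ^ t := by
          rw [hωdef, ← zpow_natCast ζ p, ← zpow_natCast ζ q, ← zpow_mul, ← zpow_mul,
            ← zpow_add₀ hζ0, ← hbez, zpow_one]
        rw [h4]; exact h3
    have hintω : IsIntegral ℚ ω := ((hω.isIntegral hp.pos).tower_top : IsIntegral ℚ ω)
    have hdeg := deg_lemma n q hq hn (ζ ^ p) ζ ω hζp hζ hintω hres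
    have htot : n.totient = (p - 1) * q.totient := by
      rw [hnpq, Nat.totient_mul hcop, Nat.totient_prime hp]
    have hdegp : (minpoly K ω).natDegree = p - 1 := by
      have h1 : q.totient * (minpoly K ω).natDegree = q.totient * (p - 1) := by
        rw [hdeg, htot]; ring
      exact Nat.eq_of_mul_eq_mul_left (Nat.totient_pos.2 hq) h1
    haveI : NeZero (p : ℂ) := ⟨Nat.cast_ne_zero.2 hp.pos.ne'⟩
    have hintωK : IsIntegral K ω := hintω.tower_top
    have hmindvd : minpoly K ω ∣ Polynomial.cyclotomic p K := by
      apply minpoly.dvd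
      have : Polynomial.aeval ω (Polynomial.cyclotomic p K)
          = Polynomial.eval ω (Polynomial.map (algebraMap K ℂ) (Polynomial.cyclotomic p K)) := by
        rw [Polynomial.aeval_def, Polynomial.eval_map]
      rw [this, Polynomial.map_cyclotomic]
      exact (Polynomial.isRoot_cyclotomic_iff).2 hω
    have hmin : minpoly K ω = Polynomial.cyclotomic p K := by
      obtain ⟨k, hk⟩ := hmindvd
      have hmono : (minpoly K ω).Monic := minpoly.monic hintωK
      have hkmono : k.Monic := by
        have := Polynomial.cyclotomic.monic p K
        rw [hk] at this
        exact Polynomial.Monic.of_mul_monic_left hmono this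
      have hdk : k.natDegree = 0 := by
        have h1 : (Polynomial.cyclotomic p K).natDegree = p - 1 := by
          rw [Polynomial.natDegree_cyclotomic, Nat.totient_prime hp]
        have h2 : (minpoly K ω).natDegree + k.natDegree = p - 1 := by
          rw [← h1, hk, Polynomial.natDegree_mul hmono.ne_zero hkmono.ne_zero]
        omega
      have : k = 1 := hkmono.natDegree_eq_zero.1 hdk
      rw [hk, this, mul_one]
    -- coefficient grouping
    set B : ℕ → K := fun c0 => ∑ i ∈ univ.filter (fun i => c i = c0), (a i : K) * ut i with hBdef
    have hBcoe : ∀ c0, ((B c0 : K) : ℂ)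
        = ∑ i ∈ univ.filter (fun i => c i = c0), (a i : ℂ) * ((ut i : K) : ℂ) := by
      intro c0
      simp only [hBdef, AddSubmonoidClass.coe_finset_sum]
      refine Finset.sum_congr rfl fun i _ => ?_
      push_cast
      rfl
    have hzero : ∑ c0 ∈ range p, (B c0 : ℂ) * ω ^ c0 = 0 := by
      rw [← hsum]
      rw [← Finset.sum_fiberwise_of_maps_to (g := c) (t := range p)
        (fun i _ => mem_range.2 (hcp i)) (fun i => (a i : ℂ) * z i)]
      refine Finset.sum_congr rfl fun c0 _ => ?_
      rw [hBcoe, Finset.sum_mul]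
      refine Finset.sum_congr rfl fun i hi => ?_
      have hci : c i = c0 := (Finset.mem_filter.1 hi).2
      rw [hdec i, hci]; ring
    have hBeq := coeff_all_eq K ω p hp hmin B hzero
    -- some class is empty
    have hempty : ∃ c0, c0 < p ∧ ∀ i : Fin r, c i ≠ c0 := by
      by_contra hcon
      push_neg at hcon
      have hsub : range p ⊆ univ.image c := by
        intro c0 hc0
        obtain ⟨i, hi⟩ := hcon c0 (mem_range.1 hc0)
        exact Finset.mem_image.2 ⟨i, Finset.mem_univ i, hi⟩
      have := Finset.card_le_card hsub
      rw [Finset.card_range] at this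
      have h2 : (univ.image c).card ≤ r := by
        calc (univ.image c).card ≤ (univ : Finset (Fin r)).card := Finset.card_image_le
          _ = r := by simp
      omega
    obtain ⟨c0, hc0p, hc0emp⟩ := hempty
    have hB0 : B c0 = 0 := by
      simp only [hBdef]
      rw [Finset.filter_false_of_mem (fun i _ => hc0emp i), Finset.sum_empty]
    have hvan : ∀ c1, ∑ i ∈ univ.filter (fun i => c i = c1), (a i : ℂ) * ((ut i : K) : ℂ) = 0 := by
      intro c1
      by_cases hc1 : c1 < p
      · rw [← hBcoe, hBeq c1 hc1 c0 hc0p, hB0]; rfl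
      · rw [Finset.filter_false_of_mem, Finset.sum_empty]
        intro i _
        have := hcp i
        omega
    exact endgame hr ω (hω.ne_zero hp.pos.ne') z (fun i => ((ut i : K) : ℂ)) c a hdec huq hvan hirr


lemma exists_prime_descent {r n : ℕ} (hn : 0 < n)
    (h : ¬ n ∣ ∏ p ∈ (Finset.range (r + 1)).filter Nat.Prime, p) :
    ∃ p, p.Prime ∧ p ∣ n ∧ (p * p ∣ n ∨ r < p) := by
  by_contra hcon
  push_neg at hcon
  have hsq : Squarefree n := by
    rw [Nat.squarefree_iff_prime_squarefree]
    intro p hp hdvd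
    have hpn : p ∣ n := dvd_trans (dvd_mul_right p p) hdvd
    exact absurd hdvd (hcon p hp hpn).1
  have hsub : n.primeFactors ⊆ (Finset.range (r + 1)).filter Nat.Prime := by
    intro p hp
    obtain ⟨hpp, hpn, _⟩ := Nat.mem_primeFactors.1 hp
    have := (hcon p hpp hpn).2
    exact Finset.mem_filter.2 ⟨Finset.mem_range.2 (by omega), hpp⟩
  have := Finset.prod_dvd_prod_of_subset _ _ (fun p => p) hsub
  rw [Nat.prod_primeFactors_of_squarefree hsq] at this
  exact h this

lemma key (r : ℕ) (a : Fin r → ℕ) :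
    ∀ n : ℕ, 0 < n → ∀ z : Fin r → ℂ, (∀ i, z i ^ n = 1) →
    (∑ i, (a i : ℂ) * z i = 0) →
    (∀ S : Finset (Fin r), S.Nonempty → S ≠ Finset.univ →
      ∑ i ∈ S, (a i : ℂ) * z i ≠ 0) →
    ∀ i j, (z i / z j) ^ (∏ p ∈ (Finset.range (r + 1)).filter Nat.Prime, p) = 1 := by
  intro n
  induction n using Nat.strong_induction_on with
  | _ n IH =>
    intro hn z hz hsum hirr
    set m := ∏ p ∈ (Finset.range (r + 1)).filter Nat.Prime, p with hm
    by_cases hnm : n ∣ m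
    · intro i j
      have hzj : z j ≠ 0 := fun h => by simpa [h, zero_pow hn.ne'] using hz j
      have hratio : (z i / z j) ^ n = 1 := by
        rw [div_pow, hz i, hz j]; norm_num
      obtain ⟨k, hk⟩ := hnm
      rw [hk, pow_mul, hratio, one_pow]
    · obtain ⟨p, hp, hpn, hcase⟩ := exists_prime_descent hn hnm
      obtain ⟨w, hw0, hw⟩ := descent hn hp hpn hcase z a hz hsum hirr
      have hnp_lt : n / p < n := Nat.div_lt_self hn hp.one_lt
      have hnp_pos : 0 < n / p := Nat.div_pos (Nat.le_of_dvd hn hpn) hp.pos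
      have hsum' : ∑ i, (a i : ℂ) * (w * z i) = 0 := by
        have : ∑ i, (a i : ℂ) * (w * z i) = w * ∑ i, (a i : ℂ) * z i := by
          rw [Finset.mul_sum]; refine Finset.sum_congr rfl fun i _ => by ring
        rw [this, hsum, mul_zero]
      have hirr' : ∀ S : Finset (Fin r), S.Nonempty → S ≠ Finset.univ →
          ∑ i ∈ S, (a i : ℂ) * (w * z i) ≠ 0 := by
        intro S hS1 hS2 hS3
        refine hirr S hS1 hS2 ?_
        have : ∑ i ∈ S, (a i : ℂ) * (w * z i) = w * ∑ i ∈ S, (a i : ℂ) * z i := by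
          rw [Finset.mul_sum]; refine Finset.sum_congr rfl fun i _ => by ring
        rw [this] at hS3
        exact (mul_eq_zero.1 hS3).resolve_left hw0
      have hres := IH (n / p) hnp_lt hnp_pos (fun i => w * z i) hw hsum' hirr'
      intro i j
      have hzj : z j ≠ 0 := fun h => by simpa [h, zero_pow hn.ne'] using hz j
      have := hres i j
      rwa [mul_div_mul_left _ _ hw0] at this


end MannProof


/-- Mann's theorem on irreducible vanishing sums of roots of unity. -/
theorem mann_theorem (r : ℕ) (hr : 0 < r) (z : Fin r → ℂ) (a : Fin r → ℕ)
    (hroot : ∀ i, ∃ n : ℕ, 0 < n ∧ z i ^ n = 1)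
    (ha : ∀ i, 0 < a i)
    (hsum : ∑ i, (a i : ℂ) * z i = 0)
    (hirr : ∀ S : Finset (Fin r), S.Nonempty → S ≠ Finset.univ →
      ∑ i ∈ S, (a i : ℂ) * z i ≠ 0) :
    ∀ i j, (z i / z j) ^ (∏ p ∈ (Finset.range (r + 1)).filter Nat.Prime, p) = 1 := by
  choose nn hnn hzn using hroot
  set N : ℕ := ∏ i, nn i with hN
  have hNpos : 0 < N := Finset.prod_pos fun i _ => hnn i
  have hzN : ∀ i, z i ^ N = 1 := by
    intro i
    obtain ⟨k, hk⟩ := Finset.dvd_prod_of_mem nn (Finset.mem_univ i)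
    rw [hN, hk, pow_mul, hzn i, one_pow]
  exact MannProof.key r a N hNpos z hzN hsum hirr
end

section
/- Let n ≥ 2 and 2 ≤ k ≤ n−2. If there exist two distinct k-element subsets of the n-th roots of unity with equal sums, then for every integer m with min(k,n−k) ≤ m ≤ max(k,n−k), there exist two distinct m-element subsets of the n-th roots of unity with equal sums. -/
open Polynomial Finset

private def Coal (n m : ℕ) : Prop :=
  ∃ S T : Finset ℂ, S ≠ T ∧ S.card = m ∧ T.card = m ∧
    (∀ z ∈ S, z ^ n = 1) ∧ (∀ z ∈ T, z ^ n = 1) ∧ ∑ z ∈ S, z = ∑ z ∈ T, z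

private lemma card_roots {n : ℕ} (hn : 2 ≤ n) : (nthRootsFinset n (1 : ℂ)).card = n :=
  (Complex.isPrimitiveRoot_exp n (by omega)).card_nthRootsFinset

private lemma sum_roots_zero {n : ℕ} (hn : 2 ≤ n) : ∑ z ∈ nthRootsFinset n (1 : ℂ), z = 0 := by
  classical
  have hζ := Complex.isPrimitiveRoot_exp n (show n ≠ 0 by omega)
  have key := hζ.nthRoots_eq (one_pow n)
  rw [nthRootsFinset_def, Finset.sum_eq_multiset_sum, Multiset.toFinset_val,
    Multiset.dedup_eq_self.mpr (hζ.nthRoots_one_nodup), Multiset.map_id', key]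
  have := hζ.geom_sum_eq_zero (by omega : 1 < n)
  rw [Finset.sum_eq_multiset_sum] at this
  simpa using this

private lemma mem_roots_iff {n : ℕ} (hn : 2 ≤ n) {z : ℂ} :
    z ∈ nthRootsFinset n (1 : ℂ) ↔ z ^ n = 1 := mem_nthRootsFinset (by omega) 1

/-- complement: coalescence at m gives coalescence at n - m -/
private lemma coal_compl {n m : ℕ} (hn : 2 ≤ n) (hm : m ≤ n) (h : Coal n m) :
    Coal n (n - m) := by
  classical
  obtain ⟨S, T, hST, hScard, hTcard, hSmem, hTmem, hsum⟩ := h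
  have hSsub : S ⊆ nthRootsFinset n (1 : ℂ) := fun z hz => (mem_roots_iff hn).mpr (hSmem z hz)
  have hTsub : T ⊆ nthRootsFinset n (1 : ℂ) := fun z hz => (mem_roots_iff hn).mpr (hTmem z hz)
  refine ⟨nthRootsFinset n (1 : ℂ) \ S, nthRootsFinset n (1 : ℂ) \ T, ?_, ?_, ?_, ?_, ?_, ?_⟩
  · intro h
    apply hST
    have this2 : nthRootsFinset n (1 : ℂ) \ (nthRootsFinset n (1 : ℂ) \ S) =
        nthRootsFinset n (1 : ℂ) \ (nthRootsFinset n (1 : ℂ) \ T) := by rw [h]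
    rwa [Finset.sdiff_sdiff_eq_self hSsub, Finset.sdiff_sdiff_eq_self hTsub] at this2
  · rw [Finset.card_sdiff_of_subset hSsub, card_roots hn, hScard]
  · rw [Finset.card_sdiff_of_subset hTsub, card_roots hn, hTcard]
  · exact fun z hz => (mem_roots_iff hn).mp (Finset.mem_sdiff.mp hz).1
  · exact fun z hz => (mem_roots_iff hn).mp (Finset.mem_sdiff.mp hz).1
  · have h1 := Finset.sum_sdiff_eq_sub (f := id) hSsub
    have h2 := Finset.sum_sdiff_eq_sub (f := id) hTsub
    simp only [id] at h1 h2
    rw [h1, h2, hsum]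

/-- step: add a fresh root -/
private lemma coal_step {n m : ℕ} (hn : 2 ≤ n) (h2m : 2 * m < n) (h : Coal n m) :
    Coal n (m + 1) := by
  classical
  obtain ⟨S, T, hST, hScard, hTcard, hSmem, hTmem, hsum⟩ := h
  have hSsub : S ⊆ nthRootsFinset n (1 : ℂ) := fun z hz => (mem_roots_iff hn).mpr (hSmem z hz)
  have hTsub : T ⊆ nthRootsFinset n (1 : ℂ) := fun z hz => (mem_roots_iff hn).mpr (hTmem z hz)
  have hsub : S ∪ T ⊆ nthRootsFinset n (1 : ℂ) := Finset.union_subset hSsub hTsub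
  have hcard : 0 < (nthRootsFinset n (1 : ℂ) \ (S ∪ T)).card := by
    rw [Finset.card_sdiff_of_subset hsub, card_roots hn]
    have := Finset.card_union_le S T
    omega
  obtain ⟨z, hz⟩ := Finset.card_pos.mp hcard
  rw [Finset.mem_sdiff, Finset.mem_union] at hz
  obtain ⟨hzR, hz⟩ := hz
  push_neg at hz
  refine ⟨insert z S, insert z T, ?_, ?_, ?_, ?_, ?_, ?_⟩
  · intro h
    apply hST
    have := congrArg (Finset.erase · z) h
    simpa [Finset.erase_insert hz.1, Finset.erase_insert hz.2] using this
  · rw [Finset.card_insert_of_notMem hz.1, hScard]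
  · rw [Finset.card_insert_of_notMem hz.2, hTcard]
  · intro w hw
    rcases Finset.mem_insert.mp hw with rfl | hw
    · exact (mem_roots_iff hn).mp hzR
    · exact hSmem w hw
  · intro w hw
    rcases Finset.mem_insert.mp hw with rfl | hw
    · exact (mem_roots_iff hn).mp hzR
    · exact hTmem w hw
  · rw [Finset.sum_insert hz.1, Finset.sum_insert hz.2, hsum]

private lemma coal_up {n a : ℕ} (hn : 2 ≤ n) (ha : Coal n a) :
    ∀ m, a ≤ m → 2 * m ≤ n + 1 → Coal n m := by
  intro m
  induction m with
  | zero => intro h1 _; exact Nat.le_zero.mp h1 ▸ ha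
  | succ m ih =>
    intro h1 h2
    rcases Nat.lt_or_ge a (m + 1) with h | h
    · exact coal_step hn (by omega) (ih (by omega) (by omega))
    · have : a = m + 1 := by omega
      exact this ▸ ha

theorem coalescence_interval (n k : ℕ) (hn : 2 ≤ n) (hk : 2 ≤ k) (hk' : k ≤ n - 2)
    (hcoal : ∃ S T : Finset ℂ, S ≠ T ∧ S.card = k ∧ T.card = k ∧
      (∀ z ∈ S, z ^ n = 1) ∧ (∀ z ∈ T, z ^ n = 1) ∧ ∑ z ∈ S, z = ∑ z ∈ T, z) :
    ∀ m : ℕ, min k (n - k) ≤ m → m ≤ max k (n - k) →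
      ∃ S T : Finset ℂ, S ≠ T ∧ S.card = m ∧ T.card = m ∧
        (∀ z ∈ S, z ^ n = 1) ∧ (∀ z ∈ T, z ^ n = 1) ∧ ∑ z ∈ S, z = ∑ z ∈ T, z := by
  intro m hm1 hm2
  have hkn : k ≤ n := by omega
  have hck : Coal n k := hcoal
  have hcnk : Coal n (n - k) := coal_compl hn hkn hck
  have hca : Coal n (min k (n - k)) := by
    rcases Nat.le_total k (n - k) with h | h
    · rwa [min_eq_left h]
    · rwa [min_eq_right h]
  have hminmax : min k (n - k) + max k (n - k) = n := by
    rcases Nat.le_total k (n - k) with h | h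
    · rw [min_eq_left h, max_eq_right h]; omega
    · rw [min_eq_right h, max_eq_left h]; omega
  rcases le_or_gt (2 * m) (n + 1) with h | h
  · exact coal_up hn hca m hm1 h
  · have h1 : min k (n - k) ≤ n - m := by omega
    have h2 : 2 * (n - m) ≤ n + 1 := by omega
    have := coal_up hn hca (n - m) h1 h2
    have := coal_compl hn (by omega) this
    rwa [show n - (n - m) = m by omega] at this
end

section
/- If p is prime and 1 ≤ k ≤ p−1, then any two k-element subsets of the p-th roots of unity with equal sums are equal. Equivalently, the map sending a k-subset of μ_p to its sum is injective. -/
theorem prime_grassmannian_non_coalescing (p k : ℕ) (hp : p.Prime) (hk : 1 ≤ k)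
    (hk' : k ≤ p - 1) (S T : Finset ℂ)
    (hS : ∀ z ∈ S, z ^ p = 1) (hT : ∀ z ∈ T, z ^ p = 1)
    (hScard : S.card = k) (hTcard : T.card = k)
    (hsum : ∑ z ∈ S, z = ∑ z ∈ T, z) :
    S = T := by
  haveI : Fact p.Prime := ⟨hp⟩
  haveI : NeZero p := ⟨hp.ne_zero⟩
  set ζ : ℂ := Complex.exp (2 * Real.pi * Complex.I / p) with hζdef
  have hζ : IsPrimitiveRoot ζ p := Complex.isPrimitiveRoot_exp p hp.ne_zero
  set f : ZMod p → ℂ := fun j => ζ ^ j.val with hfdef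
  have hfinj : Function.Injective f := by
    intro i j h
    exact ZMod.val_injective p (hζ.pow_inj (ZMod.val_lt i) (ZMod.val_lt j) h)
  -- S and T as images
  have himg : ∀ U : Finset ℂ, (∀ z ∈ U, z ^ p = 1) →
      U = Finset.image f (Finset.univ.filter (fun j => f j ∈ U)) := by
    intro U hU
    apply Finset.ext
    intro z
    constructor
    · intro hz
      obtain ⟨i, hi, rfl⟩ := hζ.eq_pow_of_pow_eq_one (hU z hz)
      refine Finset.mem_image.2 ⟨(i : ZMod p), ?_, ?_⟩
      · simp [hfdef, ZMod.val_cast_of_lt hi, hz]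
      · simp [hfdef, ZMod.val_cast_of_lt hi]
    · intro hz
      obtain ⟨j, hj, rfl⟩ := Finset.mem_image.1 hz
      exact (Finset.mem_filter.1 hj).2
  set A : Finset (ZMod p) := Finset.univ.filter (fun j => f j ∈ S) with hAdef
  set B : Finset (ZMod p) := Finset.univ.filter (fun j => f j ∈ T) with hBdef
  have hSA : S = Finset.image f A := himg S hS
  have hTB : T = Finset.image f B := himg T hT
  have hcardA : A.card = k := by
    rw [hSA, Finset.card_image_of_injective _ hfinj] at hScard; exact hScard
  have hcardB : B.card = k := by
    rw [hTB, Finset.card_image_of_injective _ hfinj] at hTcard; exact hTcard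
  -- coefficient function
  set c : ZMod p → ℤ := fun j => (if j ∈ A then 1 else 0) - (if j ∈ B then 1 else 0)
    with hcdef
  have hsum' : ∑ j : ZMod p, (c j : ℂ) * ζ ^ (ZMod.val j) = 0 := by
    have e1 : ∑ z ∈ S, z = ∑ j ∈ A, f j := by
      rw [hSA, Finset.sum_image (fun a _ b _ h => hfinj h)]
    have e2 : ∑ z ∈ T, z = ∑ j ∈ B, f j := by
      rw [hTB, Finset.sum_image (fun a _ b _ h => hfinj h)]
    have key : ∀ (U : Finset (ZMod p)),
        ∑ j : ZMod p, (if j ∈ U then f j else 0) = ∑ j ∈ U, f j := by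
      intro U; rw [Finset.sum_ite_mem, Finset.univ_inter]
    have : ∑ j : ZMod p, (c j : ℂ) * ζ ^ (ZMod.val j)
        = (∑ j ∈ A, f j) - (∑ j ∈ B, f j) := by
      rw [← key A, ← key B, ← Finset.sum_sub_distrib]
      apply Finset.sum_congr rfl
      intro j _
      by_cases hA : j ∈ A <;> by_cases hB : j ∈ B <;>
        simp [hcdef, hfdef, hA, hB]
    rw [this, ← e1, ← e2, hsum, sub_self]
  -- the polynomial with coefficients c
  set P : Polynomial ℚ := ∑ j : ZMod p, Polynomial.C ((c j : ℚ)) * Polynomial.X ^ (ZMod.val j)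
    with hPdef
  have hPcoeff : ∀ i : ZMod p, P.coeff (ZMod.val i) = (c i : ℚ) := by
    intro i
    rw [hPdef, Polynomial.finset_sum_coeff, Finset.sum_eq_single i]
    · simp
    · intro j _ hji
      rw [Polynomial.coeff_C_mul, Polynomial.coeff_X_pow]
      have hne : ZMod.val i ≠ ZMod.val j := fun h => hji (ZMod.val_injective p h.symm)
      simp [hne]
    · simp
  have hProot : Polynomial.aeval ζ P = 0 := by
    rw [hPdef]
    simp only [map_sum, map_mul, Polynomial.aeval_C, map_pow, Polynomial.aeval_X]
    simpa using hsum'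
  have hdvd : Polynomial.cyclotomic p ℚ ∣ P :=
    (Polynomial.cyclotomic_eq_minpoly_rat hζ hp.pos) ▸ minpoly.dvd ℚ ζ hProot
  have hdegP : P.natDegree ≤ p - 1 := by
    rw [hPdef]
    apply Polynomial.natDegree_sum_le_of_forall_le
    intro j _
    refine le_trans (Polynomial.natDegree_C_mul_le _ _) ?_
    rw [Polynomial.natDegree_X_pow]
    have := ZMod.val_lt j
    omega
  -- all c's are equal
  have hconst : ∀ i : ZMod p, c i = c 0 := by
    obtain ⟨g, hg⟩ := hdvd
    by_cases hP0 : P = 0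
    · intro i
      have h1 : (c i : ℚ) = 0 := by rw [← hPcoeff i, hP0, Polynomial.coeff_zero]
      have h2 : (c 0 : ℚ) = 0 := by rw [← hPcoeff 0, hP0, Polynomial.coeff_zero]
      exact_mod_cast h1.trans h2.symm
    · have hg0 : g ≠ 0 := by rintro rfl; simp [hg] at hP0
      have hΦ0 : Polynomial.cyclotomic p ℚ ≠ 0 := Polynomial.cyclotomic_ne_zero p ℚ
      have hdeg : P.natDegree = (p - 1) + g.natDegree := by
        rw [hg, Polynomial.natDegree_mul hΦ0 hg0, Polynomial.natDegree_cyclotomic,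
          Nat.totient_prime hp]
      have hgdeg : g.natDegree = 0 := by omega
      obtain ⟨q, rfl⟩ := Polynomial.natDegree_eq_zero.1 hgdeg
      have hcoeffΦ : ∀ i : ZMod p,
          (Polynomial.cyclotomic p ℚ).coeff (ZMod.val i) = 1 := by
        intro i
        rw [Polynomial.cyclotomic_prime, Polynomial.finset_sum_coeff]
        rw [Finset.sum_eq_single (ZMod.val i)]
        · simp
        · intro b _ hb; simp [Polynomial.coeff_X_pow, Ne.symm hb]
        · intro h; exact absurd (Finset.mem_range.2 (ZMod.val_lt i)) h
      have hq : ∀ i : ZMod p, (c i : ℚ) = q := by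
        intro i
        rw [← hPcoeff i, hg, Polynomial.coeff_mul_C, hcoeffΦ i, one_mul]
      intro i
      have := (hq i).trans (hq 0).symm
      exact_mod_cast this
  -- sum of c's is zero
  have hsumc : ∑ i : ZMod p, c i = 0 := by
    have h1 : ∑ i : ZMod p, (if i ∈ A then (1 : ℤ) else 0) = A.card := by
      rw [Finset.sum_ite_mem, Finset.univ_inter, Finset.sum_const, nsmul_eq_mul, mul_one]
    have h2 : ∑ i : ZMod p, (if i ∈ B then (1 : ℤ) else 0) = B.card := by
      rw [Finset.sum_ite_mem, Finset.univ_inter, Finset.sum_const, nsmul_eq_mul, mul_one]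
    simp only [hcdef, Finset.sum_sub_distrib, h1, h2, hcardA, hcardB, sub_self]
  have hc0 : c 0 = 0 := by
    have : ∑ i : ZMod p, c i = (p : ℤ) * c 0 := by
      rw [Finset.sum_congr rfl (fun i _ => hconst i), Finset.sum_const,
        Finset.card_univ, ZMod.card, nsmul_eq_mul]
    rw [this] at hsumc
    have hpne : (p : ℤ) ≠ 0 := by exact_mod_cast hp.ne_zero
    exact (mul_eq_zero.1 hsumc).resolve_left hpne
  have hczero : ∀ i : ZMod p, c i = 0 := fun i => (hconst i).trans hc0
  have hAB : A = B := by
    ext j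
    have := hczero j
    simp only [hcdef] at this
    by_cases hA : j ∈ A <;> by_cases hB : j ∈ B <;> simp [hA, hB] at this ⊢
  rw [hSA, hTB, hAB]
end

section
/- For 0 < k < n, there exist two distinct k-element subsets of the n-th roots of unity with equal sums if and only if P₁(n) ≤ k ≤ n − P₁(n). -/
open Polynomial Finset

lemma newton_aux (s : Finset ℂ) (j : ℕ) :
    (j : ℂ) * s.1.esymm j = (-1) ^ (j + 1) *
      ∑ a ∈ (antidiagonal j).filter (fun a => a.1 < j),
        (-1) ^ a.1 * s.1.esymm a.1 * ∑ z ∈ s, z ^ a.2 := by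
  have h := congrArg (MvPolynomial.aeval (fun i : {x // x ∈ s} => (i : ℂ)))
    (MvPolynomial.mul_esymm_eq_sum {x // x ∈ s} ℂ j)
  simp only [map_mul, map_sum, map_pow, map_neg, map_one, map_natCast,
    MvPolynomial.aeval_esymm_eq_multiset_esymm, MvPolynomial.psum, MvPolynomial.aeval_X,
    Finset.univ_eq_attach] at h
  have hm : Multiset.map (fun i : {x // x ∈ s} => (i : ℂ)) s.attach.val = s.val := by
    rw [Finset.attach_val]
    exact Multiset.attach_map_val s.val
  rw [hm] at h
  calc (j : ℂ) * s.1.esymm j = _ := h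
    _ = _ := by
      congr 1
      refine Finset.sum_congr rfl fun a _ => ?_
      congr 1
      exact Finset.sum_attach s (fun z => z ^ a.2)

lemma eq_of_psum_eq (k : ℕ) (s t : Finset ℂ) (hs : s.card = k) (ht : t.card = k)
    (hp : ∀ i, 1 ≤ i → i ≤ k → ∑ z ∈ s, z ^ i = ∑ z ∈ t, z ^ i) : s = t := by
  -- elementary symmetric functions agree
  have hesymm : ∀ j, j ≤ k → s.1.esymm j = t.1.esymm j := by
    intro j
    induction j using Nat.strong_induction_on with
    | _ j ih =>
      intro hjk
      rcases Nat.eq_zero_or_pos j with hj | hj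
      · subst hj; simp [Multiset.esymm]
      · have h1 := newton_aux s j
        have h2 := newton_aux t j
        have hsum : ∑ a ∈ (antidiagonal j).filter (fun a => a.1 < j),
            (-1 : ℂ) ^ a.1 * s.1.esymm a.1 * ∑ z ∈ s, z ^ a.2
            = ∑ a ∈ (antidiagonal j).filter (fun a => a.1 < j),
            (-1 : ℂ) ^ a.1 * t.1.esymm a.1 * ∑ z ∈ t, z ^ a.2 := by
          refine Finset.sum_congr rfl fun a ha => ?_
          simp only [Finset.mem_filter, Finset.HasAntidiagonal.mem_antidiagonal] at ha
          rw [ih a.1 ha.2 (le_trans (le_of_lt ha.2) hjk),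
            hp a.2 (by omega) (by omega)]
        have : (j : ℂ) * s.1.esymm j = (j : ℂ) * t.1.esymm j := by
          rw [h1, h2, hsum]
        have hj0 : (j : ℂ) ≠ 0 := Nat.cast_ne_zero.mpr (by omega)
        exact mul_left_cancel₀ hj0 this
  -- polynomials with roots -s and -t agree
  have hcs : Multiset.card s.1 = k := hs
  have hct : Multiset.card t.1 = k := ht
  have hpoly : (s.1.map (fun r => X + C r)).prod = (t.1.map (fun r => X + C r)).prod := by
    ext i
    rcases le_or_gt i k with hik | hik
    · rw [Multiset.prod_X_add_C_coeff s.1 (by rw [hcs]; exact hik),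
        Multiset.prod_X_add_C_coeff t.1 (by rw [hct]; exact hik), hcs, hct,
        hesymm _ (by omega)]
    · have h1 : ((s.1.map (fun r => X + C r)).prod).natDegree < i := by
        refine lt_of_le_of_lt ?_ hik
        refine le_trans (Polynomial.natDegree_multiset_prod_le _) ?_
        simp only [Multiset.map_map, Function.comp]
        calc (Multiset.map (fun a => (X + C a).natDegree) s.1).sum
            ≤ (Multiset.map (fun _ : ℂ => 1) s.1).sum := by
              refine Multiset.sum_map_le_sum_map _ _ fun a _ => ?_
              exact le_of_eq (Polynomial.natDegree_X_add_C a)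
          _ = s.card := by simp
          _ = k := hs
      have h2 : ((t.1.map (fun r => X + C r)).prod).natDegree < i := by
        refine lt_of_le_of_lt ?_ hik
        refine le_trans (Polynomial.natDegree_multiset_prod_le _) ?_
        simp only [Multiset.map_map, Function.comp]
        calc (Multiset.map (fun a => (X + C a).natDegree) t.1).sum
            ≤ (Multiset.map (fun _ : ℂ => 1) t.1).sum := by
              refine Multiset.sum_map_le_sum_map _ _ fun a _ => ?_
              exact le_of_eq (Polynomial.natDegree_X_add_C a)
          _ = t.card := by simp
          _ = k := ht
      rw [Polynomial.coeff_eq_zero_of_natDegree_lt h1, Polynomial.coeff_eq_zero_of_natDegree_lt h2]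
  -- conclude multisets equal
  have hroots : s.1.map (fun z : ℂ => -z) = t.1.map (fun z : ℂ => -z) := by
    have e1 : (s.1.map (fun r => X + C r)).prod
        = ((s.1.map (fun z : ℂ => -z)).map (fun a => X - C a)).prod := by
      rw [Multiset.map_map]; congr 1; apply Multiset.map_congr rfl; intro x _; simp
    have e2 : (t.1.map (fun r => X + C r)).prod
        = ((t.1.map (fun z : ℂ => -z)).map (fun a => X - C a)).prod := by
      rw [Multiset.map_map]; congr 1; apply Multiset.map_congr rfl; intro x _; simp
    have := congrArg Polynomial.roots (e1 ▸ e2 ▸ hpoly)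
    rwa [roots_multiset_prod_X_sub_C, roots_multiset_prod_X_sub_C] at this
  have : s.1 = t.1 := Multiset.map_injective neg_injective hroots
  exact Finset.val_injective this

lemma card_ge_minFac (n k : ℕ) (hn : 0 < n) (S T : Finset ℂ) (hST : S ≠ T)
    (hSc : S.card = k) (hTc : T.card = k)
    (hSp : ∀ z ∈ S, z ^ n = 1) (hTp : ∀ z ∈ T, z ^ n = 1)
    (hsum : ∑ z ∈ S, z = ∑ z ∈ T, z) : n.minFac ≤ k := by
  by_contra hlt
  push_neg at hlt
  apply hST
  haveI : NeZero n := ⟨hn.ne'⟩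
  set ζ : ℂ := Complex.exp (2 * Real.pi * Complex.I / n) with hζdef
  have hζ : IsPrimitiveRoot ζ n := Complex.isPrimitiveRoot_exp n hn.ne'
  -- exponent function
  have hexp : ∀ z : ℂ, z ^ n = 1 → ∃ i, ζ ^ i = z := by
    intro z hz
    obtain ⟨i, _, hi⟩ := hζ.eq_pow_of_pow_eq_one hz
    exact ⟨i, hi⟩
  classical
  set E : ℂ → ℕ := fun z => if h : ∃ i, ζ ^ i = z then h.choose else 0 with hE
  have hEspec : ∀ z : ℂ, z ^ n = 1 → ζ ^ (E z) = z := by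
    intro z hz
    have h := hexp z hz
    simp only [hE, dif_pos h]
    exact h.choose_spec
  -- the polynomial
  set f : ℚ[X] := (∑ z ∈ S, X ^ (E z)) - (∑ z ∈ T, X ^ (E z)) with hf
  have hfζ : aeval ζ f = 0 := by
    simp only [hf, map_sub, map_sum, map_pow, aeval_X]
    rw [Finset.sum_congr rfl (fun z hz => hEspec z (hSp z hz)),
      Finset.sum_congr rfl (fun z hz => hEspec z (hTp z hz)), hsum, sub_self]
  have hdvd : minpoly ℚ ζ ∣ f := minpoly.dvd ℚ ζ hfζ
  -- power sums agree
  have hpows : ∀ i, 1 ≤ i → i ≤ k → ∑ z ∈ S, z ^ i = ∑ z ∈ T, z ^ i := by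
    intro i h1 hik
    have hcop : i.Coprime n := by
      by_contra hnc
      have hq : (i.gcd n).minFac.Prime := Nat.minFac_prime hnc
      have hqi : (i.gcd n).minFac ∣ i := (Nat.minFac_dvd _).trans (Nat.gcd_dvd_left i n)
      have hqn : (i.gcd n).minFac ∣ n := (Nat.minFac_dvd _).trans (Nat.gcd_dvd_right i n)
      have h2 : n.minFac ≤ (i.gcd n).minFac := Nat.minFac_le_of_dvd hq.two_le hqn
      have h3 : (i.gcd n).minFac ≤ i := Nat.le_of_dvd (by omega) hqi
      omega
    have hprim : IsPrimitiveRoot (ζ ^ i) n := hζ.pow_of_coprime i hcop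
    have hcyc : aeval (ζ ^ i) (minpoly ℚ ζ) = 0 := by
      rw [← cyclotomic_eq_minpoly_rat hζ hn, cyclotomic_eq_minpoly_rat hprim hn]
      exact minpoly.aeval ℚ (ζ ^ i)
    obtain ⟨q, hq⟩ := hdvd
    have hfi : aeval (ζ ^ i) f = 0 := by
      rw [hq, map_mul, hcyc, zero_mul]
    simp only [hf, map_sub, map_sum, map_pow, aeval_X] at hfi
    have : ∀ (U : Finset ℂ), (∀ z ∈ U, z ^ n = 1) →
        ∑ z ∈ U, (ζ ^ i) ^ (E z) = ∑ z ∈ U, z ^ i := by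
      intro U hU
      refine Finset.sum_congr rfl fun z hz => ?_
      rw [← pow_mul, mul_comm, pow_mul, hEspec z (hU z hz)]
    rw [this S hSp, this T hTp] at hfi
    exact sub_eq_zero.mp hfi
  exact eq_of_psum_eq k S T hSc hTc hpows

theorem coalescing_grassmannian_characterization (n k : ℕ) (hk : 0 < k) (hkn : k < n) :
    (∃ S T : Finset ℂ, S ≠ T ∧ S.card = k ∧ T.card = k ∧
      (∀ z ∈ S, z ^ n = 1) ∧ (∀ z ∈ T, z ^ n = 1) ∧ ∑ z ∈ S, z = ∑ z ∈ T, z) ↔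
    (n.minFac ≤ k ∧ k ≤ n - n.minFac) := by
  have hn : 0 < n := lt_trans hk hkn
  have hn2 : 2 ≤ n := by omega
  haveI : NeZero n := ⟨hn.ne'⟩
  set ζ : ℂ := Complex.exp (2 * Real.pi * Complex.I / n) with hζdef
  have hζ : IsPrimitiveRoot ζ n := Complex.isPrimitiveRoot_exp n hn.ne'
  classical
  set M : Finset ℂ := (range n).image (ζ ^ ·) with hM
  have hinjM : Set.InjOn (ζ ^ ·) (range n) := fun i hi j hj h =>
    hζ.pow_inj (mem_range.mp hi) (mem_range.mp hj) h
  have hMcard : M.card = n := by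
    rw [hM, Finset.card_image_of_injOn hinjM, Finset.card_range]
  have hmem : ∀ z : ℂ, z ^ n = 1 → z ∈ M := by
    intro z hz
    obtain ⟨i, hin, hi⟩ := hζ.eq_pow_of_pow_eq_one hz
    exact Finset.mem_image.mpr ⟨i, Finset.mem_range.mpr hin, hi⟩
  have hMpow : ∀ z ∈ M, z ^ n = 1 := by
    intro z hz
    obtain ⟨i, _, rfl⟩ := Finset.mem_image.mp hz
    rw [← pow_mul, mul_comm, pow_mul, hζ.pow_eq_one, one_pow]
  have hMsum : ∑ z ∈ M, z = 0 := by
    rw [hM, Finset.sum_image hinjM]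
    exact hζ.geom_sum_eq_zero hn2
  constructor
  · rintro ⟨S, T, hST, hSc, hTc, hSp, hTp, hsum⟩
    refine ⟨card_ge_minFac n k hn S T hST hSc hTc hSp hTp hsum, ?_⟩
    have hSM : S ⊆ M := fun z hz => hmem z (hSp z hz)
    have hTM : T ⊆ M := fun z hz => hmem z (hTp z hz)
    have hle : n.minFac ≤ n - k := by
      refine card_ge_minFac n (n - k) hn (M \ S) (M \ T) ?_ ?_ ?_ ?_ ?_ ?_
      · intro h
        exact hST (by rw [← Finset.sdiff_sdiff_eq_self hSM, h, Finset.sdiff_sdiff_eq_self hTM])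
      · rw [Finset.card_sdiff_of_subset hSM, hMcard, hSc]
      · rw [Finset.card_sdiff_of_subset hTM, hMcard, hTc]
      · exact fun z hz => hMpow z (Finset.mem_sdiff.mp hz).1
      · exact fun z hz => hMpow z (Finset.mem_sdiff.mp hz).1
      · have h1 : ∑ z ∈ M \ S, z + ∑ z ∈ S, z = ∑ z ∈ M, z := Finset.sum_sdiff hSM
        have h2 : ∑ z ∈ M \ T, z + ∑ z ∈ T, z = ∑ z ∈ M, z := Finset.sum_sdiff hTM
        rw [hMsum] at h1 h2
        linear_combination h1 - h2 - hsum
    have hpn : n.minFac ≤ n := Nat.minFac_le hn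
    omega
  · rintro ⟨hpk, hknp⟩
    set p := n.minFac with hp
    have hpprime : p.Prime := Nat.minFac_prime (by omega)
    have hp2 : 2 ≤ p := hpprime.two_le
    have hpdvd : p ∣ n := Nat.minFac_dvd n
    have hpn : p ≤ n := Nat.minFac_le hn
    have h2p : 2 * p ≤ n := by omega
    have hd : n = (n / p) * p := (Nat.div_mul_cancel hpdvd).symm
    have hd2 : 2 ≤ n / p := (Nat.le_div_iff_mul_le (by omega)).mpr h2p
    set η : ℂ := ζ ^ (n / p) with hηdef
    have hη : IsPrimitiveRoot η p := hζ.pow hn hd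
    have hζne : ζ ≠ 0 := Complex.exp_ne_zero _
    set A : Finset ℂ := (range p).image (η ^ ·) with hA
    set A' : Finset ℂ := (range p).image (fun i => ζ * η ^ i) with hA'
    have hinjA : Set.InjOn (η ^ ·) (range p) := fun i hi j hj h =>
      hη.pow_inj (mem_range.mp hi) (mem_range.mp hj) h
    have hinjA' : Set.InjOn (fun i => ζ * η ^ i) (range p) := fun i hi j hj h =>
      hη.pow_inj (mem_range.mp hi) (mem_range.mp hj) (mul_left_cancel₀ hζne h)
    have hAcard : A.card = p := by rw [hA, Finset.card_image_of_injOn hinjA, Finset.card_range]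
    have hA'card : A'.card = p := by rw [hA', Finset.card_image_of_injOn hinjA', Finset.card_range]
    have hAM : A ⊆ M := by
      intro z hz
      obtain ⟨i, _, rfl⟩ := Finset.mem_image.mp hz
      rw [hηdef, ← pow_mul]
      refine hmem _ ?_
      rw [← pow_mul]
      exact (hζ.pow_eq_one_iff_dvd _).mpr ⟨n / p * i, by ring⟩
    have hA'M : A' ⊆ M := by
      intro z hz
      obtain ⟨i, _, rfl⟩ := Finset.mem_image.mp hz
      refine hmem _ ?_
      rw [mul_pow, hζ.pow_eq_one, one_mul, hηdef, ← pow_mul, ← pow_mul]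
      exact (hζ.pow_eq_one_iff_dvd _).mpr ⟨n / p * i, by ring⟩
    have hdisj : Disjoint A A' := by
      rw [Finset.disjoint_left]
      rintro x hx hx'
      obtain ⟨i, hi, rfl⟩ := Finset.mem_image.mp hx
      obtain ⟨j, hj, hji⟩ := Finset.mem_image.mp hx'
      have heq : ζ ^ (1 + (n / p) * j) = ζ ^ ((n / p) * i) := by
        rw [pow_add, pow_one, pow_mul, pow_mul]
        exact hji
      have heqz : ζ ^ ((1 + (n/p)*j : ℕ) : ℤ) = ζ ^ (((n/p)*i : ℕ) : ℤ) := by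
        rw [zpow_natCast, zpow_natCast]; exact heq
      have hz1 : ζ ^ (((1 + (n/p)*j : ℕ) : ℤ) - (((n/p)*i : ℕ) : ℤ)) = 1 := by
        rw [zpow_sub₀ hζne, heqz]; exact div_self (zpow_ne_zero _ hζne)
      have hdvdn := (hζ.zpow_eq_one_iff_dvd _).mp hz1
      have hddvd : ((n/p:ℕ):ℤ) ∣ ((1 + (n/p)*j : ℕ) : ℤ) - (((n/p)*i : ℕ) : ℤ) :=
        dvd_trans (Int.natCast_dvd_natCast.mpr (Nat.div_dvd_of_dvd hpdvd)) hdvdn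
      have h1 : ((n / p : ℕ) : ℤ) ∣ ((n / p : ℕ) : ℤ) * i := Dvd.intro _ rfl
      have h2 : ((n / p : ℕ) : ℤ) ∣ ((n / p : ℕ) : ℤ) * j := Dvd.intro _ rfl
      have hone : ((n / p : ℕ) : ℤ) ∣ 1 := by
        have h5 := (hddvd.sub h2).add h1
        convert h5 using 1
        · rfl
        push_cast
        ring
      have := Int.le_of_dvd one_pos hone
      omega
    have hsumA : ∑ z ∈ A, z = 0 := by
      rw [hA, Finset.sum_image hinjA]
      exact hη.geom_sum_eq_zero hp2
    have hsumA' : ∑ z ∈ A', z = 0 := by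
      rw [hA', Finset.sum_image hinjA', ← Finset.mul_sum, hη.geom_sum_eq_zero hp2, mul_zero]
    have hUM : A ∪ A' ⊆ M := Finset.union_subset hAM hA'M
    have hrest : (M \ (A ∪ A')).card = n - 2 * p := by
      rw [Finset.card_sdiff_of_subset hUM, hMcard, Finset.card_union_of_disjoint hdisj, hAcard, hA'card]
      omega
    obtain ⟨B, hBrest, hBcard⟩ := Finset.exists_subset_card_eq
      (show k - p ≤ (M \ (A ∪ A')).card by rw [hrest]; omega)
    have hdisjAB : Disjoint A B := by
      rw [Finset.disjoint_left]
      intro x hx hxB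
      exact (Finset.mem_sdiff.mp (hBrest hxB)).2 (Finset.mem_union_left _ hx)
    have hdisjA'B : Disjoint A' B := by
      rw [Finset.disjoint_left]
      intro x hx hxB
      exact (Finset.mem_sdiff.mp (hBrest hxB)).2 (Finset.mem_union_right _ hx)
    have hBM : B ⊆ M := fun z hz => (Finset.mem_sdiff.mp (hBrest hz)).1
    refine ⟨A ∪ B, A' ∪ B, ?_, ?_, ?_, ?_, ?_, ?_⟩
    · intro h
      have h1A : (1 : ℂ) ∈ A := Finset.mem_image.mpr ⟨0, Finset.mem_range.mpr (by omega), by simp⟩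
      have : (1 : ℂ) ∈ A' ∪ B := h ▸ Finset.mem_union_left _ h1A
      rcases Finset.mem_union.mp this with h' | h'
      · exact Finset.disjoint_left.mp hdisj h1A h'
      · exact (Finset.mem_sdiff.mp (hBrest h')).2 (Finset.mem_union_left _ h1A)
    · rw [Finset.card_union_of_disjoint hdisjAB, hAcard, hBcard]; omega
    · rw [Finset.card_union_of_disjoint hdisjA'B, hA'card, hBcard]; omega
    · intro z hz
      rcases Finset.mem_union.mp hz with h | h
      · exact hMpow z (hAM h)
      · exact hMpow z (hBM h)
    · intro z hz
      rcases Finset.mem_union.mp hz with h | h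
      · exact hMpow z (hA'M h)
      · exact hMpow z (hBM h)
    · rw [Finset.sum_union hdisjAB, Finset.sum_union hdisjA'B, hsumA, hsumA']
end

section
/- For real s > 2, Σ_{n composite, n ≥ 4} 2(P₁(n) − 1)/n^s = 2 Σ_{p prime} ((p−1)/p^s) · ( −1 + ζ(s) · ∏_{q prime, q < p} (1 − q^{−s}) ). -/
open Finset Function

/-- `m` has no prime factor below `k` (and is nonzero). -/
def rgh (k m : ℕ) : Prop := m ≠ 0 ∧ ∀ q ∈ m.primeFactors, k ≤ q

instance : ∀ k m, Decidable (rgh k m) := fun k m => by unfold rgh; infer_instance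

noncomputable def gR (s : ℝ) (k m : ℕ) : ℝ := if rgh k m then (m:ℝ)^(-s) else 0

lemma gR_nonneg (s : ℝ) (k m : ℕ) : 0 ≤ gR s k m := by
  unfold gR; split
  · exact Real.rpow_nonneg (Nat.cast_nonneg m) _
  · exact le_rfl

lemma gR_le (s : ℝ) (k m : ℕ) : gR s k m ≤ (m:ℝ)^(-s) := by
  unfold gR; split
  · exact le_rfl
  · exact Real.rpow_nonneg (Nat.cast_nonneg m) _

lemma sum0 {s : ℝ} (hs : 1 < s) : Summable (fun n : ℕ => (n:ℝ)^(-s)) :=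
  Real.summable_nat_rpow.mpr (by linarith)

lemma sumg {s : ℝ} (hs : 1 < s) (k : ℕ) : Summable (gR s k) :=
  (sum0 hs).of_nonneg_of_le (gR_nonneg s k) (gR_le s k)

lemma euler {s : ℝ} (hs : 1 < s) (k : ℕ) :
    (∑' n : ℕ, (n:ℝ)^(-s)) * ∏ q ∈ (Finset.range k).filter Nat.Prime, (1 - (q:ℝ)^(-s))
      = ∑' m, gR s k m := by
  induction k with
  | zero =>
    rw [Finset.range_zero, Finset.filter_empty, Finset.prod_empty, mul_one]
    refine tsum_congr fun m => ?_
    unfold gR rgh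
    rcases eq_or_ne m 0 with rfl | hm
    · simp [Real.zero_rpow (by linarith : -s ≠ 0)]
    · simp [hm]
  | succ k ih =>
    rw [Finset.range_add_one, Finset.filter_insert]
    by_cases hk : k.Prime
    · rw [if_pos hk, Finset.prod_insert (by simp)]
      set h : ℕ → ℝ := fun m => if rgh k m ∧ k ∣ m then (m:ℝ)^(-s) else 0 with hh
      have hpt : ∀ m, gR s k m = gR s (k+1) m + h m := by
        intro m
        rcases eq_or_ne m 0 with rfl | hm
        · simp [gR, rgh, hh]
        by_cases hr : rgh k m
        · by_cases hd : k ∣ m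
          · have hk1 : ¬ rgh (k+1) m := by
              rintro ⟨-, h2⟩
              have := h2 k (Nat.mem_primeFactors.mpr ⟨hk, hd, hm⟩)
              omega
            simp [gR, hh, hr, hd, hk1]
          · have hk1 : rgh (k+1) m := by
              refine ⟨hm, fun q hq => ?_⟩
              have h1 := hr.2 q hq
              rcases eq_or_lt_of_le h1 with rfl | hlt
              · exact absurd (Nat.dvd_of_mem_primeFactors hq) hd
              · omega
            simp [gR, hh, hr, hd, hk1]
        · have hk1 : ¬ rgh (k+1) m := fun ⟨h1, h2⟩ =>
            hr ⟨h1, fun q hq => le_trans (by omega) (h2 q hq)⟩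
          simp [gR, hh, hr, hk1]
      have hsumh : Summable h := (sum0 hs).of_nonneg_of_le
        (fun m => by rw [hh]; dsimp only; split
                     exacts [Real.rpow_nonneg (Nat.cast_nonneg m) _, le_rfl])
        (fun m => by rw [hh]; dsimp only; split
                     exacts [le_rfl, Real.rpow_nonneg (Nat.cast_nonneg m) _])
      have h1 : ∑' m, gR s k m = ∑' m, gR s (k+1) m + ∑' m, h m := by
        rw [← Summable.tsum_add (sumg hs (k+1)) hsumh]; exact tsum_congr hpt
      have h2 : ∑' m, h m = (k:ℝ)^(-s) * ∑' m, gR s k m := by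
        have hinj : Function.Injective (fun m : ℕ => k * m) := fun a b e =>
          Nat.eq_of_mul_eq_mul_left hk.pos e
        have hvan : Function.support h ⊆ Set.range (fun m : ℕ => k * m) := by
          intro x hx
          have hx2 : rgh k x ∧ k ∣ x := by
            by_contra hc; exact hx (by simp [hh, hc])
          obtain ⟨c, rfl⟩ := hx2.2
          exact ⟨c, rfl⟩
        rw [← hinj.tsum_eq hvan]
        have hkey : ∀ m, h (k * m) = (k:ℝ)^(-s) * gR s k m := by
          intro m
          rcases eq_or_ne m 0 with rfl | hm
          · simp [hh, gR, rgh]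
          have hkm : k * m ≠ 0 := Nat.mul_ne_zero hk.ne_zero hm
          have hiff : rgh k (k * m) ↔ rgh k m := by
            unfold rgh
            rw [Nat.primeFactors_mul hk.ne_zero hm, hk.primeFactors]
            constructor
            · rintro ⟨-, h2⟩
              exact ⟨hm, fun q hq => h2 q (Finset.mem_union_right _ hq)⟩
            · rintro ⟨-, h2⟩
              refine ⟨hkm, fun q hq => ?_⟩
              rcases Finset.mem_union.mp hq with hq | hq
              · rw [Finset.mem_singleton.mp hq]
              · exact h2 q hq
          by_cases hr : rgh k m
          · have hv : ((k:ℝ) * (m:ℝ))^(-s) = (k:ℝ)^(-s) * (m:ℝ)^(-s) :=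
              Real.mul_rpow (Nat.cast_nonneg k) (Nat.cast_nonneg m)
            simp [hh, gR, hiff.mpr hr, hr, dvd_mul_right, Nat.cast_mul, hv]
          · have hnc : ¬ (rgh k (k * m) ∧ k ∣ k * m) := fun hc => hr (hiff.mp hc.1)
            simp [hh, gR, hr, hiff]
        rw [tsum_congr hkey, tsum_mul_left]
      have h3 : ∑' m, gR s (k+1) m = ∑' m, gR s k m - (k:ℝ)^(-s) * ∑' m, gR s k m := by
        linarith [h1, h2]
      rw [h3, ← ih]; ring
    · rw [if_neg hk, ih]
      refine tsum_congr fun m => ?_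
      unfold gR
      have : rgh (k+1) m ↔ rgh k m := by
        unfold rgh
        refine and_congr_right fun hm => forall₂_congr fun q hq => ⟨fun h => by omega, fun h => ?_⟩
        have hqp : q.Prime := Nat.prime_of_mem_primeFactors hq
        have : q ≠ k := fun e => hk (e ▸ hqp)
        omega
      exact if_congr this.symm rfl rfl

noncomputable def Ff (s : ℝ) (p n : ℕ) : ℝ :=
  if 2 ≤ n ∧ ¬ n.Prime ∧ n.minFac = p then ((p:ℝ) - 1) / (n:ℝ)^s else 0

lemma Ff_nonneg (s : ℝ) (p n : ℕ) : 0 ≤ Ff s p n := by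
  unfold Ff; split
  · rename_i hc
    have h2 : 2 ≤ n.minFac := (Nat.minFac_prime (by omega : n ≠ 1)).two_le
    have hp2 : 2 ≤ p := hc.2.2 ▸ h2
    have hp1 : (1:ℝ) ≤ (p:ℝ) := by exact_mod_cast by omega
    exact div_nonneg (by linarith) (Real.rpow_nonneg (Nat.cast_nonneg n) s)
  · exact le_rfl

lemma Ff_le (s : ℝ) (p n : ℕ) : Ff s p n ≤ (n:ℝ)^(1-s) := by
  unfold Ff; split
  · rename_i hc
    obtain ⟨h2, -, hmf⟩ := hc
    have hn0 : (0:ℝ) < (n:ℝ) := by exact_mod_cast (by omega : 0 < n)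
    have hp_le : p ≤ n := hmf ▸ Nat.minFac_le (by omega)
    have hpn : (p:ℝ) ≤ (n:ℝ) := by exact_mod_cast hp_le
    rw [Real.rpow_sub hn0, Real.rpow_one]
    exact (div_le_div_iff_of_pos_right (Real.rpow_pos_of_pos hn0 s)).mpr (by linarith)
  · exact Real.rpow_nonneg (Nat.cast_nonneg n) _

lemma sumFdiag {s : ℝ} (hs : 2 < s) : Summable (fun n : ℕ => Ff s n.minFac n) :=
  (Real.summable_nat_rpow.mpr (by linarith : 1 - s < -1)).of_nonneg_of_le
    (fun n => Ff_nonneg s n.minFac n) (fun n => Ff_le s n.minFac n)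

lemma Ff_le_diag (s : ℝ) (p n : ℕ) : Ff s p n ≤ Ff s n.minFac n := by
  by_cases hc : 2 ≤ n ∧ ¬ n.Prime ∧ n.minFac = p
  · rw [show p = n.minFac from hc.2.2.symm]
  · rw [Ff, if_neg hc]; exact Ff_nonneg s n.minFac n

lemma Ff_not_prime {s : ℝ} {p : ℕ} (hp : ¬ p.Prime) (n : ℕ) : Ff s p n = 0 := by
  rw [Ff, if_neg]
  rintro ⟨h2, -, rfl⟩
  exact hp (Nat.minFac_prime (by omega : n ≠ 1))

lemma stepC {s : ℝ} (hs : 1 < s) {p : ℕ} (hp : p.Prime) :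
    (((p:ℝ) - 1) / (p:ℝ)^s) *
      (-1 + (∑' n : ℕ, (n:ℝ)^(-s)) *
        ∏ q ∈ (Finset.range p).filter Nat.Prime, (1 - (q:ℝ)^(-s)))
      = ∑' n, Ff s p n := by
  rw [euler hs p]
  set g2 : ℕ → ℝ := fun m => if 2 ≤ m ∧ rgh p m then (m:ℝ)^(-s) else 0 with hg2
  have hsum2 : Summable g2 := (sum0 hs).of_nonneg_of_le
    (fun m => by rw [hg2]; dsimp only; split
                 exacts [Real.rpow_nonneg (Nat.cast_nonneg m) _, le_rfl])
    (fun m => by rw [hg2]; dsimp only; split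
                 exacts [le_rfl, Real.rpow_nonneg (Nat.cast_nonneg m) _])
  have hsplit : ∑' m, gR s p m = ∑' m, g2 m + 1 := by
    have hpt : ∀ m, gR s p m = g2 m + (if m = 1 then 1 else 0) := by
      intro m
      match m with
      | 0 => simp [gR, rgh, hg2]
      | 1 =>
        have h1 : rgh p 1 := ⟨one_ne_zero, by simp⟩
        simp [gR, hg2, h1]
      | (m+2) =>
        have h2 : 2 ≤ m + 2 := by omega
        simp [gR, hg2, h2]
    rw [tsum_congr hpt, Summable.tsum_add hsum2 ⟨1, hasSum_ite_eq 1 1⟩, tsum_ite_eq 1 (fun _ => (1:ℝ))]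
  rw [hsplit]
  have hsimp : (-1 : ℝ) + (∑' m, g2 m + 1) = ∑' m, g2 m := by ring
  rw [hsimp, ← tsum_mul_left]
  have hinj : Function.Injective (fun m : ℕ => p * m) := fun a b e =>
    Nat.eq_of_mul_eq_mul_left hp.pos e
  have hvan : Function.support (Ff s p) ⊆ Set.range (fun m : ℕ => p * m) := by
    intro n hn
    have hc : 2 ≤ n ∧ ¬ n.Prime ∧ n.minFac = p := by
      by_contra hcc; exact hn (by simp [Ff, hcc])
    obtain ⟨c, hcc⟩ := hc.2.2 ▸ Nat.minFac_dvd n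
    exact ⟨c, hcc.symm⟩
  rw [← hinj.tsum_eq hvan]
  refine tsum_congr fun m => ?_
  by_cases hcond : 2 ≤ m ∧ rgh p m
  · have h2m := hcond.1
    have hm0 := hcond.2.1
    have hrm := hcond.2.2
    have h2p := hp.two_le
    have h2pm : 2 ≤ p * m := le_trans h2p (Nat.le_mul_of_pos_right p (by omega))
    have hnp : ¬ (p * m).Prime := by
      intro hpr
      rcases hpr.eq_one_or_self_of_dvd p (dvd_mul_right p m) with h | h
      · omega
      · have hm1 : p * 1 = p * m := by rw [mul_one]; exact h
        have := Nat.eq_of_mul_eq_mul_left hp.pos hm1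
        omega
    have hmf : (p * m).minFac = p := by
      have hle : (p * m).minFac ≤ p := Nat.minFac_le_of_dvd h2p (dvd_mul_right p m)
      have hq : ((p * m).minFac).Prime := Nat.minFac_prime (by omega)
      have hd : (p * m).minFac ∣ p * m := Nat.minFac_dvd _
      rcases (Nat.Prime.dvd_mul hq).mp hd with h | h
      · exact (Nat.prime_dvd_prime_iff_eq hq hp).mp h
      · have : p ≤ (p * m).minFac := hrm _ (Nat.mem_primeFactors.mpr ⟨hq, h, hm0⟩)
        omega
    rw [hg2]; dsimp only
    rw [if_pos hcond, Ff, if_pos ⟨h2pm, hnp, hmf⟩]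
    have hcast : ((p * m : ℕ) : ℝ) = (p:ℝ) * (m:ℝ) := by push_cast; ring
    rw [hcast, Real.mul_rpow (Nat.cast_nonneg p) (Nat.cast_nonneg m),
      Real.rpow_neg (Nat.cast_nonneg m), ← div_eq_mul_inv, div_div]
  · have hF0 : ¬ (2 ≤ p * m ∧ ¬ (p * m).Prime ∧ (p * m).minFac = p) := by
      rintro ⟨h2, hnp, hmf⟩
      apply hcond
      have hm0 : m ≠ 0 := by rintro rfl; rw [mul_zero] at h2; omega
      have hm1 : m ≠ 1 := by rintro rfl; rw [mul_one] at hnp; exact hnp hp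
      refine ⟨by omega, hm0, fun q hq => ?_⟩
      have hqd : q ∣ p * m := (Nat.dvd_of_mem_primeFactors hq).mul_left p
      have := Nat.minFac_le_of_dvd (Nat.prime_of_mem_primeFactors hq).two_le hqd
      omega
    simp [Ff, hF0, hg2, hcond]

lemma zeta_shift {s : ℝ} (hs : 1 < s) :
    (∑' n : ℕ, ((n:ℝ) + 1)^(-s)) = ∑' n : ℕ, (n:ℝ)^(-s) := by
  rw [Summable.tsum_eq_zero_add (sum0 hs), Nat.cast_zero,
    Real.zero_rpow (by linarith : -s ≠ 0), zero_add]
  exact tsum_congr fun n => by push_cast; ring_nf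

theorem composite_sum_eq_prime_sum (s : ℝ) (hs : 2 < s) :
    ∑' n : ℕ, (if 2 ≤ n ∧ ¬ n.Prime then 2 * ((n.minFac : ℝ) - 1) / (n : ℝ) ^ s else 0)
      = 2 * ∑' p : ℕ, (if p.Prime then
          (((p : ℝ) - 1) / (p : ℝ) ^ s) *
            (-1 + (∑' n : ℕ, ((n : ℝ) + 1) ^ (-s)) *
              ∏ q ∈ (Finset.range p).filter Nat.Prime, (1 - (q : ℝ) ^ (-s)))
        else 0) := by
  have hs1 : 1 < s := by linarith
  rw [zeta_shift hs1]
  have hrhs : ∀ p : ℕ, (if p.Prime then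
      (((p : ℝ) - 1) / (p : ℝ) ^ s) *
        (-1 + (∑' n : ℕ, (n:ℝ) ^ (-s)) *
          ∏ q ∈ (Finset.range p).filter Nat.Prime, (1 - (q : ℝ) ^ (-s)))
      else 0) = ∑' n, Ff s p n := by
    intro p
    by_cases hp : p.Prime
    · rw [if_pos hp]; exact stepC hs1 hp
    · rw [if_neg hp]
      exact ((tsum_congr (Ff_not_prime hp)).trans tsum_zero).symm
  have hinjd : Function.Injective (fun n : ℕ => ((n.minFac, n) : ℕ × ℕ)) :=
    fun a b e => congrArg Prod.snd e
  have hvand : Function.support (fun q : ℕ × ℕ => Ff s q.1 q.2)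
      ⊆ Set.range (fun n : ℕ => ((n.minFac, n) : ℕ × ℕ)) := by
    intro q hq
    have hc : 2 ≤ q.2 ∧ ¬ q.2.Prime ∧ q.2.minFac = q.1 := by
      by_contra hcc; exact hq (by simp [Ff, hcc])
    exact ⟨q.2, Prod.ext hc.2.2 rfl⟩
  have hGsum : Summable (fun q : ℕ × ℕ => Ff s q.1 q.2) :=
    (hinjd.summable_iff (fun x hx => Function.notMem_support.mp
      (fun hsx => hx (hvand hsx)))).mp (sumFdiag hs)
  have hinner : ∀ p : ℕ, Summable (fun n => Ff s p n) := fun p =>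
    (sumFdiag hs).of_nonneg_of_le (Ff_nonneg s p) (Ff_le_diag s p)
  calc ∑' n : ℕ, (if 2 ≤ n ∧ ¬ n.Prime then 2 * ((n.minFac : ℝ) - 1) / (n : ℝ) ^ s else 0)
      = 2 * ∑' n : ℕ, Ff s n.minFac n := by
        rw [← tsum_mul_left]
        refine tsum_congr fun n => ?_
        by_cases hc : 2 ≤ n ∧ ¬ n.Prime
        · rw [if_pos hc, Ff, if_pos ⟨hc.1, hc.2, rfl⟩, mul_div_assoc]
        · rw [if_neg hc, Ff, if_neg (fun h => hc ⟨h.1, h.2.1⟩), mul_zero]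
    _ = 2 * ∑' q : ℕ × ℕ, Ff s q.1 q.2 :=
        congrArg (2 * ·) (hinjd.tsum_eq hvand)
    _ = 2 * ∑' p : ℕ, ∑' n : ℕ, Ff s p n :=
        congrArg (2 * ·) (Summable.tsum_prod' hGsum hinner)
    _ = _ := by rw [tsum_congr hrhs]
end

section
/- Let G be a cyclic group of squarefree order m = p₁⋯p_r (r ≥ 2, primes p₁ < ⋯ < p_r), φ: ℤG → ℤ[ζ_m] the ring map sending a fixed generator to a primitive m-th root of unity ζ_m, and x, y ∈ ℕG (elements with nonnegative coefficients) with φ(x) = φ(y). If the number of nonzero coefficients of x equals that of y, then x = y. -/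
open IntermediateField Polynomial

lemma zmod_sum_range {M : Type*} [AddCommMonoid M] (n : ℕ) [NeZero n] (f : ZMod n → M) :
    ∑ i : ZMod n, f i = ∑ j ∈ Finset.range n, f (j : ZMod n) := by
  apply Finset.sum_bij' (fun (i : ZMod n) _ => i.val) (fun j _ => ((j : ZMod n)))
  · intro i _; exact Finset.mem_range.2 i.val_lt
  · intro j _; exact Finset.mem_univ _
  · intro i _; simp [ZMod.natCast_val, ZMod.cast_id]
  · intro j hj; exact ZMod.val_natCast_of_lt (Finset.mem_range.1 hj)
  · intro i _; congr 1; simp [ZMod.natCast_val, ZMod.cast_id]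

lemma filter_card_eq (n : ℕ) [NeZero n] (P : ZMod n → Prop) [DecidablePred P] :
    ((Finset.range n).filter fun j : ℕ => P ((j : ZMod n))).card
      = (Finset.univ.filter P).card := by
  apply Finset.card_bij (fun j _ => ((j : ℕ) : ZMod n))
  · intro a ha
    simp only [Finset.mem_filter, Finset.mem_univ, true_and]
    exact (Finset.mem_filter.1 ha).2
  · intro a ha b hb hab
    have ha' := Finset.mem_range.1 (Finset.mem_filter.1 ha).1
    have hb' := Finset.mem_range.1 (Finset.mem_filter.1 hb).1
    rw [← ZMod.val_natCast_of_lt ha', ← ZMod.val_natCast_of_lt hb', hab]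
  · intro b hb
    refine ⟨b.val, Finset.mem_filter.2 ⟨Finset.mem_range.2 b.val_lt, ?_⟩, ZMod.natCast_zmod_val b⟩
    rw [ZMod.natCast_zmod_val b]
    exact (Finset.mem_filter.1 hb).2

lemma key_s19 (p n' : ℕ) [NeZero p] (hp : p.Prime) (hn' : 0 < n') (hco : Nat.Coprime p n')
    (ζp ζ' : ℂ) (hζp : IsPrimitiveRoot ζp p) (hζ' : IsPrimitiveRoot ζ' n')
    (c : ZMod p → ℂ)
    (hc : ∀ j, c j ∈ IntermediateField.adjoin ℚ {ζ'})
    (hsum : ∑ j : ZMod p, c j * ζp ^ j.val = 0) :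
    ∀ i j : ZMod p, c i = c j := by
  haveI : NeZero n' := ⟨hn'.ne'⟩
  set K : IntermediateField ℚ ℂ := IntermediateField.adjoin ℚ {ζ'} with hK
  set ζ : ℂ := ζp * ζ' with hζdef
  have hords : orderOf ζp = p := hζp.eq_orderOf.symm
  have hords' : orderOf ζ' = n' := hζ'.eq_orderOf.symm
  have hζ : IsPrimitiveRoot ζ (p * n') := by
    have := (Commute.all ζp ζ').orderOf_mul_eq_mul_orderOf_of_coprime
      (by rw [hords, hords']; exact hco)
    rw [hords, hords'] at this
    rw [← this]
    exact IsPrimitiveRoot.orderOf ζ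
  have hpn' : 0 < p * n' := Nat.mul_pos hp.pos hn'
  have hiζ' : IsIntegral ℚ ζ' := (hζ'.isIntegral hn').tower_top
  have hiζ : IsIntegral ℚ ζ := (hζ.isIntegral hpn').tower_top
  have hiζp : IsIntegral ℚ ζp := (hζp.isIntegral hp.pos).tower_top
  have hiζpK : IsIntegral K ζp := hiζp.tower_top
  have hfr' : Module.finrank ℚ K = Nat.totient n' := by
    rw [hK, IntermediateField.adjoin.finrank hiζ',
      ← Polynomial.cyclotomic_eq_minpoly_rat hζ' hn', Polynomial.natDegree_cyclotomic]
  have hfrζ : Module.finrank ℚ (IntermediateField.adjoin ℚ {ζ} : IntermediateField ℚ ℂ)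
      = Nat.totient (p * n') := by
    rw [IntermediateField.adjoin.finrank hiζ,
      ← Polynomial.cyclotomic_eq_minpoly_rat hζ hpn', Polynomial.natDegree_cyclotomic]
  -- ζ' and ζp are powers of ζ
  have hζ'pow : ∃ e : ℕ, ζ ^ e = ζ' := by
    have hu : IsUnit ((p : ℕ) : ZMod n') := (ZMod.isUnit_iff_coprime p n').2 hco
    refine ⟨p * ((p : ZMod n')⁻¹).val, ?_⟩
    have h1 : ((p * ((p : ZMod n')⁻¹).val : ℕ) : ZMod n') = 1 := by
      push_cast [ZMod.natCast_val, ZMod.cast_id]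
      exact ZMod.mul_inv_of_unit _ hu
    have hmod : p * ((p : ZMod n')⁻¹).val ≡ 1 [MOD n'] := by
      rwa [← Nat.cast_one (R := ZMod n'), ZMod.natCast_eq_natCast_iff] at h1
    rw [hζdef, mul_pow, pow_mul ζp p, hζp.pow_eq_one, one_pow, one_mul]
    calc ζ' ^ (p * ((p : ZMod n')⁻¹).val)
        = ζ' ^ (p * ((p : ZMod n')⁻¹).val % orderOf ζ') := (pow_mod_orderOf _ _).symm
      _ = ζ' ^ (1 % orderOf ζ') := by rw [hords']; exact congrArg (ζ' ^ ·) hmod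
      _ = ζ' ^ 1 := pow_mod_orderOf _ _
      _ = ζ' := pow_one ζ'
  have hζppow : ∃ e : ℕ, ζ ^ e = ζp := by
    have hu : IsUnit ((n' : ℕ) : ZMod p) := (ZMod.isUnit_iff_coprime n' p).2 hco.symm
    refine ⟨n' * ((n' : ZMod p)⁻¹).val, ?_⟩
    have h1 : ((n' * ((n' : ZMod p)⁻¹).val : ℕ) : ZMod p) = 1 := by
      push_cast [ZMod.natCast_val, ZMod.cast_id]
      exact ZMod.mul_inv_of_unit _ hu
    have hmod : n' * ((n' : ZMod p)⁻¹).val ≡ 1 [MOD p] := by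
      rwa [← Nat.cast_one (R := ZMod p), ZMod.natCast_eq_natCast_iff] at h1
    rw [hζdef, mul_pow, pow_mul ζ' n', hζ'.pow_eq_one, one_pow, mul_one]
    calc ζp ^ (n' * ((n' : ZMod p)⁻¹).val)
        = ζp ^ (n' * ((n' : ZMod p)⁻¹).val % orderOf ζp) := (pow_mod_orderOf _ _).symm
      _ = ζp ^ (1 % orderOf ζp) := by rw [hords]; exact congrArg (ζp ^ ·) hmod
      _ = ζp ^ 1 := pow_mod_orderOf _ _
      _ = ζp := pow_one ζp
  have hrs : (IntermediateField.adjoin K {ζp}).restrictScalars ℚ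
      = IntermediateField.adjoin ℚ {ζ} := by
    rw [hK]; refine (IntermediateField.adjoin_adjoin_left ℚ {ζ'} {ζp}).trans ?_
    apply le_antisymm
    · apply IntermediateField.adjoin_le_iff.2
      rintro x hx
      rcases hx with hx | hx
      · rw [Set.mem_singleton_iff] at hx
        rw [SetLike.mem_coe, hx]
        obtain ⟨e, he⟩ := hζ'pow
        rw [← he]; exact pow_mem (IntermediateField.mem_adjoin_simple_self ℚ ζ) e
      · rw [Set.mem_singleton_iff] at hx
        rw [SetLike.mem_coe, hx]
        obtain ⟨e, he⟩ := hζppow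
        rw [← he]; exact pow_mem (IntermediateField.mem_adjoin_simple_self ℚ ζ) e
    · apply IntermediateField.adjoin_simple_le_iff.2
      exact mul_mem
        (IntermediateField.subset_adjoin ℚ _ (Set.mem_union_right _ rfl))
        (IntermediateField.subset_adjoin ℚ _ (Set.mem_union_left _ rfl))
  haveI hfK : FiniteDimensional ℚ K := IntermediateField.adjoin.finiteDimensional hiζ'
  haveI hfKp : FiniteDimensional K (IntermediateField.adjoin K {ζp}) :=
    IntermediateField.adjoin.finiteDimensional hiζpK
  have hfrK : Module.finrank K (IntermediateField.adjoin K {ζp}) = p - 1 := by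
    have tower : Module.finrank ℚ K * Module.finrank K (IntermediateField.adjoin K {ζp})
        = Module.finrank ℚ (IntermediateField.adjoin K {ζp}) :=
      Module.finrank_mul_finrank ℚ K (IntermediateField.adjoin K {ζp})
    have hres : Module.finrank ℚ (IntermediateField.adjoin K {ζp})
        = Module.finrank ℚ ((IntermediateField.adjoin K {ζp}).restrictScalars ℚ) := rfl
    rw [hres, hrs, hfrζ, hfr'] at tower
    have htot : Nat.totient (p * n') = (p - 1) * Nat.totient n' := by
      rw [Nat.totient_mul hco, Nat.totient_prime hp, mul_comm]
    rw [htot, mul_comm (p-1)] at tower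
    exact Nat.eq_of_mul_eq_mul_left (Nat.totient_pos.2 hn') tower
  have hndeg : (minpoly K ζp).natDegree = p - 1 := by
    rw [← IntermediateField.adjoin.finrank hiζpK, hfrK]
  have hli : LinearIndependent K fun i : Fin (p - 1) => ζp ^ (i : ℕ) := by
    have := linearIndependent_pow (K := K) (S := ℂ) ζp
    rwa [hndeg] at this
  -- now the sum manipulation
  set t : ℂ := c ((p - 1 : ℕ) : ZMod p) with ht
  have hsum' : ∑ i ∈ Finset.range p, c (i : ZMod p) * ζp ^ i = 0 := by
    rw [← hsum, zmod_sum_range p (fun i => c i * ζp ^ i.val)]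
    apply Finset.sum_congr rfl
    intro j hj
    rw [ZMod.val_natCast_of_lt (Finset.mem_range.1 hj)]
  have hpp : p - 1 + 1 = p := Nat.succ_pred_eq_of_pos hp.pos
  have h1 : ∑ i ∈ Finset.range (p-1), c (i : ZMod p) * ζp ^ i + t * ζp ^ (p-1) = 0 := by
    rw [ht, ← Finset.sum_range_succ (fun i => c (i : ZMod p) * ζp ^ i) (p-1), hpp]
    exact hsum'
  have h2 : ∑ i ∈ Finset.range (p-1), ζp ^ i + ζp ^ (p-1) = 0 := by
    rw [← Finset.sum_range_succ (fun i => ζp ^ i) (p-1), hpp]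
    exact hζp.geom_sum_eq_zero hp.one_lt
  have hz : ∑ i : Fin (p - 1),
      (⟨c ((i : ℕ) : ZMod p) - t, sub_mem (hc _) (hc _)⟩ : K) • ζp ^ (i : ℕ) = 0 := by
    have hs : ∀ (a : K) (z : ℂ), a • z = (a : ℂ) * z := fun a z => rfl
    simp only [hs]
    rw [Fin.sum_univ_eq_sum_range (fun i => (c ((i : ℕ) : ZMod p) - t) * ζp ^ i) (p-1)]
    have : ∑ i ∈ Finset.range (p-1), (c ((i : ℕ) : ZMod p) - t) * ζp ^ i
        = ∑ i ∈ Finset.range (p-1), c ((i : ℕ) : ZMod p) * ζp ^ i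
          - t * ∑ i ∈ Finset.range (p-1), ζp ^ i := by
      rw [Finset.mul_sum, ← Finset.sum_sub_distrib]
      apply Finset.sum_congr rfl
      intro i _; ring
    rw [this]
    linear_combination h1 - t * h2
  have hcoef := Fintype.linearIndependent_iff.1 hli _ hz
  have hall : ∀ j : ZMod p, c j = t := by
    intro j
    have hjv : j = ((j.val : ℕ) : ZMod p) := by simp [ZMod.natCast_val, ZMod.cast_id]
    have hjle : j.val ≤ p - 1 := Nat.le_sub_one_of_lt j.val_lt
    rcases lt_or_eq_of_le hjle with h | h
    · have h0 := hcoef ⟨j.val, h⟩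
      have h0' : c ((j.val : ℕ) : ZMod p) - t = (0 : ℂ) := Subtype.ext_iff.1 h0
      rw [hjv]
      exact sub_eq_zero.1 h0'
    · rw [hjv, h]
  intro i j; rw [hall i, hall j]

lemma core : ∀ m : ℕ, 0 < m → Squarefree m → ∀ ζ : ℂ, IsPrimitiveRoot ζ m →
    ∀ u v : ZMod m → ℕ,
    (∀ q : ℕ, q.Prime → q ∣ m →
      ((Finset.range m).filter fun j : ℕ => u ((j : ZMod m)) ≠ 0).card < q) →
    (∀ q : ℕ, q.Prime → q ∣ m →
      ((Finset.range m).filter fun j : ℕ => v ((j : ZMod m)) ≠ 0).card < q) →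
    (∑ j ∈ Finset.range m, (u ((j : ZMod m)) : ℂ) * ζ ^ j
      = ∑ j ∈ Finset.range m, (v ((j : ZMod m)) : ℂ) * ζ ^ j) →
    u = v := by
  intro m
  induction m using Nat.strong_induction_on with
  | _ m ih =>
  intro hm hsf ζ hζ u v hu hv hsum
  haveI : NeZero m := ⟨hm.ne'⟩
  rcases eq_or_lt_of_le (show 1 ≤ m from hm) with h1 | h1
  · -- m = 1
    subst h1
    simp only [Finset.sum_range_one, pow_zero, mul_one, Nat.cast_inj] at hsum
    funext k
    have hk : k = ((0 : ℕ) : ZMod 1) := Subsingleton.elim _ _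
    rw [hk]; exact hsum
  -- m > 1
  have hm1 : m ≠ 1 := h1.ne'
  set p := m.minFac with hpdef
  have hp : p.Prime := Nat.minFac_prime hm1
  have hpd : p ∣ m := Nat.minFac_dvd m
  set m' := m / p with hm'def
  have hmm : m = p * m' := (Nat.mul_div_cancel' hpd).symm
  have hm' : 0 < m' := Nat.div_pos (Nat.minFac_le hm) hp.pos
  haveI : NeZero m' := ⟨hm'.ne'⟩
  haveI : NeZero p := ⟨hp.pos.ne'⟩
  have hco : Nat.Coprime p m' := by
    rw [Nat.Prime.coprime_iff_not_dvd hp]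
    intro hdvd
    have hpp : p * p ∣ m := by rw [hmm]; exact mul_dvd_mul_left p hdvd
    exact hp.one_lt.ne' (Nat.isUnit_iff.1 (hsf p hpp))
  have hm'd : m' ∣ m := ⟨p, by rw [hmm, mul_comm]⟩
  have hsf' : Squarefree m' := hsf.squarefree_of_dvd hm'd
  have hqgt : ∀ q : ℕ, q.Prime → q ∣ m' → p < q := by
    intro q hq hq'
    have hqm : q ∣ m := hq'.trans hm'd
    rcases lt_or_eq_of_le (Nat.minFac_le_of_dvd hq.two_le hqm) with h | h
    · exact h
    · exfalso
      rw [← h] at hq'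
      have : p ∣ 1 := hco ▸ Nat.dvd_gcd dvd_rfl hq'
      exact hp.one_lt.ne' (Nat.dvd_one.mp this)
  -- Bezout-style exponents
  have hum' : IsUnit ((m' : ℕ) : ZMod p) := (ZMod.isUnit_iff_coprime m' p).2 hco.symm
  have hup : IsUnit ((p : ℕ) : ZMod m') := (ZMod.isUnit_iff_coprime p m').2 hco
  set a : ℕ := m' * ((m' : ZMod p)⁻¹).val with hadef
  set b : ℕ := p * ((p : ZMod m')⁻¹).val with hbdef
  have hamod : a ≡ 1 [MOD p] := by
    have h1 : ((a : ℕ) : ZMod p) = 1 := by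
      rw [hadef]
      push_cast [ZMod.natCast_val, ZMod.cast_id]
      exact ZMod.mul_inv_of_unit _ hum'
    rwa [← Nat.cast_one (R := ZMod p), ZMod.natCast_eq_natCast_iff] at h1
  have hbmod : b ≡ 1 [MOD m'] := by
    have h1 : ((b : ℕ) : ZMod m') = 1 := by
      rw [hbdef]
      push_cast [ZMod.natCast_val, ZMod.cast_id]
      exact ZMod.mul_inv_of_unit _ hup
    rwa [← Nat.cast_one (R := ZMod m'), ZMod.natCast_eq_natCast_iff] at h1
  have hamod' : a ≡ 0 [MOD m'] := Nat.modEq_zero_iff_dvd.2 ⟨_, rfl⟩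
  have hbmod' : b ≡ 0 [MOD p] := Nat.modEq_zero_iff_dvd.2 ⟨_, rfl⟩
  have hab : a + b ≡ 1 [MOD m] := by
    rw [hmm, ← Nat.modEq_and_modEq_iff_modEq_mul hco]
    constructor
    · simpa using hamod.add hbmod'
    · simpa using hamod'.add hbmod
  -- the primitive roots
  set ζp : ℂ := ζ ^ a with hζpdef
  set ζ' : ℂ := ζ ^ b with hζ'def
  have hζp : IsPrimitiveRoot ζp p := by
    have h1 : IsPrimitiveRoot (ζ ^ m') p := hζ.pow hm (by rw [hmm, mul_comm])
    have h2 := h1.pow_of_coprime (((m' : ZMod p)⁻¹).val)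
      (Nat.coprime_of_mul_modEq_one m' (by
        have := hamod; rwa [hadef, mul_comm] at this))
    rwa [hζpdef, hadef, pow_mul]
  have hζ' : IsPrimitiveRoot ζ' m' := by
    have h1 : IsPrimitiveRoot (ζ ^ p) m' := hζ.pow hm hmm
    have h2 := h1.pow_of_coprime (((p : ZMod m')⁻¹).val)
      (Nat.coprime_of_mul_modEq_one p (by
        have := hbmod; rwa [hbdef, mul_comm] at this))
    rwa [hζ'def, hbdef, pow_mul]
  have hordζ : orderOf ζ = m := hζ.eq_orderOf.symm
  have hordζp : orderOf ζp = p := hζp.eq_orderOf.symm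
  have hordζ' : orderOf ζ' = m' := hζ'.eq_orderOf.symm
  -- the power decomposition identity
  have POW : ∀ k : ZMod m, ζ ^ k.val = ζp ^ (k.val % p) * ζ' ^ (k.val % m') := by
    intro k
    have h1 : ζ ^ k.val = ζ ^ (k.val * (a + b)) := by
      calc ζ ^ k.val = ζ ^ (k.val * 1 % orderOf ζ) := by
            rw [mul_one, pow_mod_orderOf]
        _ = ζ ^ (k.val * (a + b) % orderOf ζ) := by
            rw [hordζ]; exact congrArg (ζ ^ ·) ((Nat.ModEq.mul_left k.val hab).symm)
        _ = ζ ^ (k.val * (a + b)) := pow_mod_orderOf _ _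
    have e1 : ζp ^ k.val = ζ ^ (k.val * a) := by rw [hζpdef, ← pow_mul, mul_comm]
    have e2 : ζ' ^ k.val = ζ ^ (k.val * b) := by rw [hζ'def, ← pow_mul, mul_comm]
    have f1 : ζp ^ k.val = ζp ^ (k.val % p) := by
      have hh := pow_mod_orderOf ζp k.val; rw [hordζp] at hh; exact hh.symm
    have f2 : ζ' ^ k.val = ζ' ^ (k.val % m') := by
      have hh := pow_mod_orderOf ζ' k.val; rw [hordζ'] at hh; exact hh.symm
    calc ζ ^ k.val = ζ ^ (k.val * (a + b)) := h1
      _ = ζ ^ (k.val * a) * ζ ^ (k.val * b) := by rw [Nat.mul_add, pow_add]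
      _ = ζp ^ k.val * ζ' ^ k.val := by rw [e1, e2]
      _ = ζp ^ (k.val % p) * ζ' ^ (k.val % m') := by rw [f1, f2]
  -- CRT bijection
  have hcards : Fintype.card (ZMod m) = Fintype.card (ZMod p × ZMod m') := by
    simp [ZMod.card, hmm]
  set f : ZMod m → ZMod p × ZMod m' :=
    fun k => (((k.val : ℕ) : ZMod p), ((k.val : ℕ) : ZMod m')) with hfdef
  have hinj : Function.Injective f := by
    intro k1 k2 hk
    have h1 : ((k1.val : ℕ) : ZMod p) = ((k2.val : ℕ) : ZMod p) := congrArg Prod.fst hk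
    have h2 : ((k1.val : ℕ) : ZMod m') = ((k2.val : ℕ) : ZMod m') := congrArg Prod.snd hk
    rw [ZMod.natCast_eq_natCast_iff] at h1 h2
    have h3 : k1.val ≡ k2.val [MOD m] := by
      have h5 := (Nat.modEq_and_modEq_iff_modEq_mul hco).1 ⟨h1, h2⟩
      rwa [← hmm] at h5
    have h4 : k1.val = k2.val := by
      have e1 := h3; unfold Nat.ModEq at e1
      rwa [Nat.mod_eq_of_lt k1.val_lt, Nat.mod_eq_of_lt k2.val_lt] at e1
    rw [← ZMod.natCast_zmod_val k1, ← ZMod.natCast_zmod_val k2, h4]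
  have hbijf : Function.Bijective f := (Fintype.bijective_iff_injective_and_card f).2 ⟨hinj, hcards⟩
  set E : ZMod m ≃ (ZMod p × ZMod m') := Equiv.ofBijective f hbijf with hEdef
  have hE1 : ∀ k : ZMod m, (E k).1.val = k.val % p := fun k => ZMod.val_natCast _ _
  have hE2 : ∀ k : ZMod m, (E k).2.val = k.val % m' := fun k => ZMod.val_natCast _ _
  -- sum conversion
  have SRANGE : ∀ w : ZMod m → ℕ,
      ∑ j ∈ Finset.range m, (w ((j : ZMod m)) : ℂ) * ζ ^ j
        = ∑ k : ZMod m, (w k : ℂ) * ζ ^ k.val := by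
    intro w
    rw [zmod_sum_range m (fun k => (w k : ℂ) * ζ ^ k.val)]
    apply Finset.sum_congr rfl
    intro j hj
    rw [ZMod.val_natCast_of_lt (Finset.mem_range.1 hj)]
  have SDEC : ∀ w : ZMod m → ℕ,
      ∑ k : ZMod m, (w k : ℂ) * ζ ^ k.val
        = ∑ j : ZMod p,
            (∑ k' : ZMod m', (w (E.symm (j, k')) : ℂ) * ζ' ^ k'.val) * ζp ^ j.val := by
    intro w
    have step1 : ∀ k : ZMod m, (w k : ℂ) * ζ ^ k.val
        = (w (E.symm (E k)) : ℂ) * ζ' ^ ((E k).2.val) * ζp ^ ((E k).1.val) := by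
      intro k
      rw [E.symm_apply_apply, POW k, hE1 k, hE2 k]
      ring
    calc ∑ k : ZMod m, (w k : ℂ) * ζ ^ k.val
        = ∑ k : ZMod m,
            (w (E.symm (E k)) : ℂ) * ζ' ^ ((E k).2.val) * ζp ^ ((E k).1.val) :=
          Finset.sum_congr rfl (fun k _ => step1 k)
      _ = ∑ j : ZMod p, ∑ k' : ZMod m',
            (w (E.symm (j, k')) : ℂ) * ζ' ^ (k'.val) * ζp ^ (j.val) := by
          have hh := Equiv.sum_comp E
            (fun jk : ZMod p × ZMod m' => (w (E.symm jk) : ℂ) * ζ' ^ jk.2.val * ζp ^ jk.1.val)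
          rw [hh, Fintype.sum_prod_type]
      _ = ∑ j : ZMod p,
            (∑ k' : ZMod m', (w (E.symm (j, k')) : ℂ) * ζ' ^ k'.val) * ζp ^ j.val := by
          apply Finset.sum_congr rfl
          intro j _
          rw [Finset.sum_mul]
  -- supports and fibers
  classical
  set Su : Finset (ZMod m) := Finset.univ.filter (fun k => u k ≠ 0) with hSudef
  set Sv : Finset (ZMod m) := Finset.univ.filter (fun k => v k ≠ 0) with hSvdef
  have hs : Su.card < p := by
    have := hu p hp hpd
    rwa [filter_card_eq m (fun k => u k ≠ 0)] at this
  have ht : Sv.card < p := by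
    have := hv p hp hpd
    rwa [filter_card_eq m (fun k => v k ≠ 0)] at this
  set A : Finset (ZMod p) := Su.image (fun k => (E k).1) with hAdef
  set B : Finset (ZMod p) := Sv.image (fun k => (E k).1) with hBdef
  have hAcard : A.card ≤ Su.card := Finset.card_image_le
  have hBcard : B.card ≤ Sv.card := Finset.card_image_le
  set F : ZMod p → ℕ := fun j => (Su.filter (fun k => (E k).1 = j)).card with hFdef
  set Gf : ZMod p → ℕ := fun j => (Sv.filter (fun k => (E k).1 = j)).card with hGdef
  have hFsum : ∑ j : ZMod p, F j = Su.card :=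
    (Finset.card_eq_sum_card_fiberwise (fun k _ => Finset.mem_univ ((E k).1))).symm
  have hGsum : ∑ j : ZMod p, Gf j = Sv.card :=
    (Finset.card_eq_sum_card_fiberwise (fun k _ => Finset.mem_univ ((E k).1))).symm
  have hfiber : ∀ (w : ZMod m → ℕ) (j : ZMod p),
      (Finset.univ.filter fun k' : ZMod m' => w (E.symm (j, k')) ≠ 0).card
        = ((Finset.univ.filter (fun k => w k ≠ 0)).filter (fun k => (E k).1 = j)).card := by
    intro w j
    apply Finset.card_bij (fun k' _ => E.symm (j, k'))
    · intro k' hk'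
      simp only [Finset.mem_filter, Finset.mem_univ, true_and] at hk' ⊢
      exact ⟨hk', by rw [Equiv.apply_symm_apply]⟩
    · intro a _ b _ hab
      have h := congrArg E hab
      rw [Equiv.apply_symm_apply, Equiv.apply_symm_apply] at h
      exact congrArg Prod.snd h
    · intro k hk
      simp only [Finset.mem_filter, Finset.mem_univ, true_and] at hk
      refine ⟨(E k).2, ?_, ?_⟩
      · simp only [Finset.mem_filter, Finset.mem_univ, true_and]
        rw [← hk.2, Prod.mk.eta, Equiv.symm_apply_apply]
        exact hk.1
      · rw [← hk.2, Prod.mk.eta, Equiv.symm_apply_apply]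
  have hFuj : ∀ j : ZMod p,
      (Finset.univ.filter fun k' : ZMod m' => u (E.symm (j, k')) ≠ 0).card = F j :=
    fun j => hfiber u j
  have hGvj : ∀ j : ZMod p,
      (Finset.univ.filter fun k' : ZMod m' => v (E.symm (j, k')) ≠ 0).card = Gf j :=
    fun j => hfiber v j
  have hAF : ∀ j : ZMod p, j ∈ A ↔ F j ≠ 0 := by
    intro j
    rw [hAdef, hFdef]
    simp only [Finset.mem_image, ne_eq, Finset.card_eq_zero, not_not]
    constructor
    · rintro ⟨k, hk, rfl⟩ hemp
      have h : k ∈ Su.filter (fun k' => (E k').1 = (E k).1) := Finset.mem_filter.2 ⟨hk, rfl⟩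
      rw [hemp] at h
      exact absurd h (Finset.notMem_empty k)
    · intro hne
      obtain ⟨k, hk⟩ := Finset.nonempty_iff_ne_empty.2 hne
      have h := Finset.mem_filter.1 hk
      exact ⟨k, h.1, h.2⟩
  have hBG : ∀ j : ZMod p, j ∈ B ↔ Gf j ≠ 0 := by
    intro j
    rw [hBdef, hGdef]
    simp only [Finset.mem_image, ne_eq, Finset.card_eq_zero, not_not]
    constructor
    · rintro ⟨k, hk, rfl⟩ hemp
      have h : k ∈ Sv.filter (fun k' => (E k').1 = (E k).1) := Finset.mem_filter.2 ⟨hk, rfl⟩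
      rw [hemp] at h
      exact absurd h (Finset.notMem_empty k)
    · intro hne
      obtain ⟨k, hk⟩ := Finset.nonempty_iff_ne_empty.2 hne
      have h := Finset.mem_filter.1 hk
      exact ⟨k, h.1, h.2⟩
  have huzero : ∀ j : ZMod p, F j = 0 → ∀ k' : ZMod m', u (E.symm (j, k')) = 0 := by
    intro j hFj k'
    by_contra hne
    have hmem : k' ∈ Finset.univ.filter fun k' : ZMod m' => u (E.symm (j, k')) ≠ 0 :=
      Finset.mem_filter.2 ⟨Finset.mem_univ _, hne⟩
    have h := hFuj j
    rw [hFj, Finset.card_eq_zero] at h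
    rw [h] at hmem
    exact absurd hmem (Finset.notMem_empty k')
  have hvzero : ∀ j : ZMod p, Gf j = 0 → ∀ k' : ZMod m', v (E.symm (j, k')) = 0 := by
    intro j hGj k'
    by_contra hne
    have hmem : k' ∈ Finset.univ.filter fun k' : ZMod m' => v (E.symm (j, k')) ≠ 0 :=
      Finset.mem_filter.2 ⟨Finset.mem_univ _, hne⟩
    have h := hGvj j
    rw [hGj, Finset.card_eq_zero] at h
    rw [h] at hmem
    exact absurd hmem (Finset.notMem_empty k')
  -- the coefficient sums
  set U : ZMod p → ℂ := fun j => ∑ k' : ZMod m', (u (E.symm (j, k')) : ℂ) * ζ' ^ k'.val with hUdef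
  set V : ZMod p → ℂ := fun j => ∑ k' : ZMod m', (v (E.symm (j, k')) : ℂ) * ζ' ^ k'.val with hVdef
  have hUV : ∑ j : ZMod p, (U j - V j) * ζp ^ j.val = 0 := by
    have h2 : ∑ j : ZMod p, U j * ζp ^ j.val = ∑ j : ZMod p, V j * ζp ^ j.val := by
      rw [hUdef, hVdef]
      rw [← SDEC u, ← SDEC v, ← SRANGE u, ← SRANGE v]
      exact hsum
    calc ∑ j : ZMod p, (U j - V j) * ζp ^ j.val
        = ∑ j : ZMod p, (U j * ζp ^ j.val - V j * ζp ^ j.val) :=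
          Finset.sum_congr rfl (fun j _ => sub_mul _ _ _)
      _ = ∑ j : ZMod p, U j * ζp ^ j.val - ∑ j : ZMod p, V j * ζp ^ j.val :=
          Finset.sum_sub_distrib _ _
      _ = 0 := by rw [h2, sub_self]
  have hmemK : ∀ j : ZMod p, U j - V j ∈ IntermediateField.adjoin ℚ {ζ'} := by
    intro j
    apply sub_mem
    · apply sum_mem
      intro k' _
      exact mul_mem (_root_.natCast_mem _ _)
        (pow_mem (IntermediateField.mem_adjoin_simple_self ℚ ζ') _)
    · apply sum_mem
      intro k' _
      exact mul_mem (_root_.natCast_mem _ _)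
        (pow_mem (IntermediateField.mem_adjoin_simple_self ℚ ζ') _)
  have hceq := key_s19 p m' hp hm' hco ζp ζ' hζp hζ' (fun j => U j - V j) hmemK hUV
  have SRANGE' : ∀ w : ZMod m' → ℕ,
      ∑ j ∈ Finset.range m', (w ((j : ZMod m')) : ℂ) * ζ' ^ j
        = ∑ k' : ZMod m', (w k' : ℂ) * ζ' ^ k'.val := by
    intro w
    rw [zmod_sum_range m' (fun k' => (w k' : ℂ) * ζ' ^ k'.val)]
    apply Finset.sum_congr rfl
    intro j hj
    rw [ZMod.val_natCast_of_lt (Finset.mem_range.1 hj)]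
  have hmlt : m' < m := by rw [hm'def]; exact Nat.div_lt_self hm hp.one_lt
  have hcardp : Fintype.card (ZMod p) = p := ZMod.card p
  by_cases hcase : A ∪ B = (Finset.univ : Finset (ZMod p))
  · -- both classes cover everything : contradiction
    exfalso
    have hBc : (Bᶜ : Finset (ZMod p)).Nonempty := by
      rw [← Finset.card_pos, Finset.card_compl]
      have h3 : B.card < p := lt_of_le_of_lt hBcard ht
      omega
    have hAc : (Aᶜ : Finset (ZMod p)).Nonempty := by
      rw [← Finset.card_pos, Finset.card_compl]
      have h3 : A.card < p := lt_of_le_of_lt hAcard hs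
      omega
    obtain ⟨j₁, hj₁Bc, hj₁min⟩ := Finset.exists_min_image Bᶜ F hBc
    obtain ⟨j₀, hj₀Ac, hj₀min⟩ := Finset.exists_min_image Aᶜ Gf hAc
    have hj₁B : j₁ ∉ B := Finset.mem_compl.1 hj₁Bc
    have hj₀A : j₀ ∉ A := Finset.mem_compl.1 hj₀Ac
    have hj₁A : j₁ ∈ A := by
      have h5 : j₁ ∈ A ∪ B := by rw [hcase]; exact Finset.mem_univ j₁
      rcases Finset.mem_union.1 h5 with h | h
      · exact h
      · exact absurd h hj₁B
    have hj₀B : j₀ ∈ B := by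
      have h5 : j₀ ∈ A ∪ B := by rw [hcase]; exact Finset.mem_univ j₀
      rcases Finset.mem_union.1 h5 with h | h
      · exact absurd h hj₀A
      · exact h
    have hcount1 : F j₁ + (A.card - 1) ≤ Su.card := by
      have e1 : ∑ j ∈ A, F j ≤ Su.card := by
        rw [← hFsum]
        exact Finset.sum_le_sum_of_subset (Finset.subset_univ A)
      have e2 : F j₁ + ∑ j ∈ A.erase j₁, F j = ∑ j ∈ A, F j :=
        Finset.add_sum_erase A F hj₁A
      have e3 : (A.erase j₁).card ≤ ∑ j ∈ A.erase j₁, F j := by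
        have := Finset.card_nsmul_le_sum (A.erase j₁) F 1
          (fun x hx => Nat.one_le_iff_ne_zero.2 ((hAF x).1 (Finset.mem_of_mem_erase hx)))
        simpa using this
      have e4 : (A.erase j₁).card = A.card - 1 := Finset.card_erase_of_mem hj₁A
      omega
    have hcount2 : Gf j₀ + (B.card - 1) ≤ Sv.card := by
      have e1 : ∑ j ∈ B, Gf j ≤ Sv.card := by
        rw [← hGsum]
        exact Finset.sum_le_sum_of_subset (Finset.subset_univ B)
      have e2 : Gf j₀ + ∑ j ∈ B.erase j₀, Gf j = ∑ j ∈ B, Gf j :=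
        Finset.add_sum_erase B Gf hj₀B
      have e3 : (B.erase j₀).card ≤ ∑ j ∈ B.erase j₀, Gf j := by
        have := Finset.card_nsmul_le_sum (B.erase j₀) Gf 1
          (fun x hx => Nat.one_le_iff_ne_zero.2 ((hBG x).1 (Finset.mem_of_mem_erase hx)))
        simpa using this
      have e4 : (B.erase j₀).card = B.card - 1 := Finset.card_erase_of_mem hj₀B
      omega
    have hABp : p ≤ A.card + B.card := by
      have h5 : (A ∪ B).card = p := by rw [hcase, Finset.card_univ, hcardp]
      have h6 := Finset.card_union_le A B
      omega
    have hApos : 1 ≤ A.card := Finset.card_pos.2 ⟨j₁, hj₁A⟩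
    have hBpos : 1 ≤ B.card := Finset.card_pos.2 ⟨j₀, hj₀B⟩
    have hFG : F j₁ + Gf j₀ ≤ p := by omega
    have hGfj₁ : Gf j₁ = 0 := not_not.1 (fun h => hj₁B ((hBG j₁).2 h))
    have hFj₀ : F j₀ = 0 := not_not.1 (fun h => hj₀A ((hAF j₀).2 h))
    have hVj₁ : V j₁ = 0 := by
      rw [hVdef]
      apply Finset.sum_eq_zero
      intro k' _
      rw [hvzero j₁ hGfj₁ k']
      simp
    have hUj₀ : U j₀ = 0 := by
      rw [hUdef]
      apply Finset.sum_eq_zero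
      intro k' _
      rw [huzero j₀ hFj₀ k']
      simp
    have hkey2 : U j₁ + V j₀ = 0 := by
      have h6 := hceq j₁ j₀
      rw [hVj₁, hUj₀] at h6
      linear_combination h6
    set w : ZMod m' → ℕ := fun k' => u (E.symm (j₁, k')) + v (E.symm (j₀, k')) with hwdef
    have hL : ∑ k' : ZMod m', ((w k' : ℕ) : ℂ) * ζ' ^ k'.val = U j₁ + V j₀ := by
      rw [hwdef, hUdef, hVdef, ← Finset.sum_add_distrib]
      apply Finset.sum_congr rfl
      intro k' _
      push_cast
      ring
    have hwsum : ∑ j ∈ Finset.range m', ((w ((j : ZMod m')) : ℕ) : ℂ) * ζ' ^ j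
        = ∑ j ∈ Finset.range m', (((fun _ : ZMod m' => (0 : ℕ)) ((j : ZMod m')) : ℕ) : ℂ) * ζ' ^ j := by
      rw [SRANGE' w, SRANGE' (fun _ => (0 : ℕ)), hL, hkey2]
      simp
    have hwq : ∀ q : ℕ, q.Prime → q ∣ m' →
        ((Finset.range m').filter fun j : ℕ => w ((j : ZMod m')) ≠ 0).card < q := by
      intro q hq hqd
      rw [filter_card_eq m' (fun k' => w k' ≠ 0)]
      have hsub : (Finset.univ.filter fun k' : ZMod m' => w k' ≠ 0)
          ⊆ (Finset.univ.filter fun k' : ZMod m' => u (E.symm (j₁, k')) ≠ 0)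
            ∪ (Finset.univ.filter fun k' : ZMod m' => v (E.symm (j₀, k')) ≠ 0) := by
        intro k' hk'
        have h7 := (Finset.mem_filter.1 hk').2
        rw [hwdef] at h7
        have h7' : u (E.symm (j₁, k')) + v (E.symm (j₀, k')) ≠ 0 := h7
        by_cases hu0 : u (E.symm (j₁, k')) = 0
        · exact Finset.mem_union_right _ (Finset.mem_filter.2 ⟨Finset.mem_univ _, by omega⟩)
        · exact Finset.mem_union_left _ (Finset.mem_filter.2 ⟨Finset.mem_univ _, hu0⟩)
      calc (Finset.univ.filter fun k' : ZMod m' => w k' ≠ 0).card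
          ≤ ((Finset.univ.filter fun k' : ZMod m' => u (E.symm (j₁, k')) ≠ 0)
            ∪ (Finset.univ.filter fun k' : ZMod m' => v (E.symm (j₀, k')) ≠ 0)).card :=
            Finset.card_le_card hsub
        _ ≤ (Finset.univ.filter fun k' : ZMod m' => u (E.symm (j₁, k')) ≠ 0).card
            + (Finset.univ.filter fun k' : ZMod m' => v (E.symm (j₀, k')) ≠ 0).card :=
            Finset.card_union_le _ _
        _ = F j₁ + Gf j₀ := by rw [hFuj, hGvj]
        _ ≤ p := hFG
        _ < q := hqgt q hq hqd
    have h0q : ∀ q : ℕ, q.Prime → q ∣ m' →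
        ((Finset.range m').filter fun j : ℕ => (fun _ : ZMod m' => (0 : ℕ)) ((j : ZMod m')) ≠ 0).card < q := by
      intro q hq _
      simp only [ne_eq, not_not]
      convert hq.pos using 2
      convert Finset.card_empty using 2
      apply Finset.filter_false_of_mem
      intro x _
      simp
    have hw0 := ih m' hmlt hm' hsf' ζ' hζ' w (fun _ => (0 : ℕ)) hwq h0q hwsum
    have hFj₁ne : F j₁ ≠ 0 := (hAF j₁).1 hj₁A
    have h8 := hFuj j₁
    rw [← h8] at hFj₁ne
    obtain ⟨k', hk'⟩ := Finset.card_ne_zero.1 hFj₁ne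
    have h9 := (Finset.mem_filter.1 hk').2
    have h10 := congrFun hw0 k'
    rw [hwdef] at h10
    simp only at h10
    exact h9 (Nat.eq_zero_of_add_eq_zero_right h10)
  · -- there is an empty class: all components equal
    have hne : (((A ∪ B)ᶜ : Finset (ZMod p))).Nonempty := by
      rw [← Finset.card_pos, Finset.card_compl]
      have h5 : (A ∪ B).card < p := by
        have h6 := Finset.card_lt_card (Finset.ssubset_univ_iff.2 hcase)
        rwa [Finset.card_univ, hcardp] at h6
      omega
    obtain ⟨jstar, hjstar⟩ := hne
    have hjA : jstar ∉ A := fun h =>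
      (Finset.mem_compl.1 hjstar) (Finset.mem_union_left _ h)
    have hjB : jstar ∉ B := fun h =>
      (Finset.mem_compl.1 hjstar) (Finset.mem_union_right _ h)
    have hFjs : F jstar = 0 := not_not.1 (fun h => hjA ((hAF jstar).2 h))
    have hGjs : Gf jstar = 0 := not_not.1 (fun h => hjB ((hBG jstar).2 h))
    have hUjs : U jstar = 0 := by
      rw [hUdef]
      apply Finset.sum_eq_zero
      intro k' _
      rw [huzero jstar hFjs k']
      simp
    have hVjs : V jstar = 0 := by
      rw [hVdef]
      apply Finset.sum_eq_zero
      intro k' _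
      rw [hvzero jstar hGjs k']
      simp
    have hUVeq : ∀ j : ZMod p, U j = V j := by
      intro j
      have h6 := hceq j jstar
      rw [hUjs, hVjs] at h6
      linear_combination h6
    have hjeq : ∀ j : ZMod p,
        (fun k' : ZMod m' => u (E.symm (j, k'))) = (fun k' : ZMod m' => v (E.symm (j, k'))) := by
      intro j
      apply ih m' hmlt hm' hsf' ζ' hζ'
      · intro q hq hqd
        rw [filter_card_eq m' (fun k' => u (E.symm (j, k')) ≠ 0), hFuj j]
        have h7 : F j ≤ Su.card := by
          rw [← hFsum]
          exact Finset.single_le_sum (fun i _ => Nat.zero_le (F i)) (Finset.mem_univ j)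
        exact lt_trans (lt_of_le_of_lt h7 hs) (hqgt q hq hqd)
      · intro q hq hqd
        rw [filter_card_eq m' (fun k' => v (E.symm (j, k')) ≠ 0), hGvj j]
        have h7 : Gf j ≤ Sv.card := by
          rw [← hGsum]
          exact Finset.single_le_sum (fun i _ => Nat.zero_le (Gf i)) (Finset.mem_univ j)
        exact lt_trans (lt_of_le_of_lt h7 ht) (hqgt q hq hqd)
      · rw [SRANGE' (fun k' : ZMod m' => u (E.symm (j, k'))),
          SRANGE' (fun k' : ZMod m' => v (E.symm (j, k')))]
        exact hUVeq j
    funext k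
    have h7 := congrFun (hjeq (E k).1) (E k).2
    rw [Prod.mk.eta, Equiv.symm_apply_apply] at h7
    exact h7

/-- Corollary of the Lam–Leung theorem: two nonnegative elements of the group ring of a
cyclic group of squarefree order with the same image in `ℤ[ζ_m]` and the same number of
nonzero coefficients (at most `p₁ - 1`) are equal. -/
theorem lam_leung_corollary (G : Type) [CommGroup G] [Fintype G] (g : G)
    (hg : ∀ x : G, x ∈ Subgroup.zpowers g)
    (m : ℕ) (hm : Fintype.card G = m) (hsf : Squarefree m)
    (r : ℕ) (hr : 2 ≤ r) (p : Fin r → ℕ) (hp : ∀ i, (p i).Prime) (hmono : StrictMono p)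
    (hprod : m = ∏ i, p i)
    (ζ : ℂ) (hζ : IsPrimitiveRoot ζ m)
    (φ : MonoidAlgebra ℤ G →+* ℂ) (hφ : φ (MonoidAlgebra.of ℤ G g) = ζ)
    (x y : MonoidAlgebra ℤ G) (hx : ∀ a : G, 0 ≤ x.coeff a) (hy : ∀ a : G, 0 ≤ y.coeff a)
    (hε : x.coeff.support.card ≤ p ⟨0, by omega⟩ - 1)
    (hφxy : φ x = φ y) (hcard : x.coeff.support.card = y.coeff.support.card) :
    x = y := by
  classical
  have hmp : 0 < m := hm ▸ Fintype.card_pos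
  haveI : NeZero m := ⟨hmp.ne'⟩
  have horder : orderOf g = m := by
    rw [← hm, ← Nat.card_eq_fintype_card]; exact orderOf_eq_card_of_forall_mem_zpowers hg
  set θ : ZMod m → G := fun k => g ^ k.val with hθdef
  have hinj : Function.Injective θ := by
    intro k1 k2 hk
    rw [hθdef] at hk
    simp only at hk
    rw [pow_eq_pow_iff_modEq, horder] at hk
    have h4 : k1.val = k2.val := by
      have e1 := hk; unfold Nat.ModEq at e1
      rwa [Nat.mod_eq_of_lt k1.val_lt, Nat.mod_eq_of_lt k2.val_lt] at e1
    rw [← ZMod.natCast_zmod_val k1, ← ZMod.natCast_zmod_val k2, h4]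
  have hsurj : Function.Surjective θ := by
    intro w
    obtain ⟨n, hn⟩ := hg w
    refine ⟨((n : ℤ) : ZMod m), ?_⟩
    rw [hθdef]
    simp only
    calc g ^ (((n : ℤ) : ZMod m).val) = g ^ ((((n : ℤ) : ZMod m).val : ℤ)) := by
          rw [zpow_natCast]
      _ = g ^ ((n % (m : ℤ) : ℤ)) := by rw [ZMod.val_intCast]
      _ = g ^ n := by rw [← horder]; exact zpow_mod_orderOf _ _
      _ = w := hn
  set E : ZMod m ≃ G := Equiv.ofBijective θ ⟨hinj, hsurj⟩ with hEdef
  -- evaluation of φ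
  have hφsupp : ∀ z : MonoidAlgebra ℤ G,
      φ z = ∑ a ∈ z.coeff.support, (z.coeff a : ℂ) * φ (MonoidAlgebra.of ℤ G a) := by
    intro z
    conv_lhs => rw [← MonoidAlgebra.sum_coeff_single z]
    rw [Finsupp.sum, map_sum]
    apply Finset.sum_congr rfl
    intro a _
    have h1 : MonoidAlgebra.single a (z.coeff a) = (z.coeff a) • MonoidAlgebra.single a (1 : ℤ) := by
      rw [MonoidAlgebra.smul_single, smul_eq_mul, mul_one]
    rw [h1, map_zsmul, zsmul_eq_mul]
    rfl
  have hφθ : ∀ k : ZMod m, φ (MonoidAlgebra.of ℤ G (θ k)) = ζ ^ k.val := by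
    intro k
    rw [hθdef]
    simp only
    rw [map_pow (MonoidAlgebra.of ℤ G) g k.val, map_pow, hφ]
  have hφeval : ∀ z : MonoidAlgebra ℤ G,
      φ z = ∑ k : ZMod m, (z.coeff (θ k) : ℂ) * ζ ^ k.val := by
    intro z
    rw [hφsupp z]
    have h2 : ∑ a ∈ z.coeff.support, (z.coeff a : ℂ) * φ (MonoidAlgebra.of ℤ G a)
        = ∑ a : G, (z.coeff a : ℂ) * φ (MonoidAlgebra.of ℤ G a) := by
      apply Finset.sum_subset (Finset.subset_univ _)
      intro a _ ha
      rw [Finsupp.notMem_support_iff.1 ha]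
      simp
    rw [h2, ← Equiv.sum_comp E (fun a => (z.coeff a : ℂ) * φ (MonoidAlgebra.of ℤ G a))]
    apply Finset.sum_congr rfl
    intro k _
    have h3 : E k = θ k := rfl
    rw [h3, hφθ k]
  -- the ℕ-valued coefficient functions
  set u : ZMod m → ℕ := fun k => (x.coeff (θ k)).toNat with hudef
  set v : ZMod m → ℕ := fun k => (y.coeff (θ k)).toNat with hvdef
  have hucast : ∀ k : ZMod m, ((u k : ℕ) : ℂ) = ((x.coeff (θ k) : ℤ) : ℂ) := by
    intro k
    rw [hudef]
    simp only
    rw [← Int.cast_natCast, Int.toNat_of_nonneg (hx (θ k))]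
  have hvcast : ∀ k : ZMod m, ((v k : ℕ) : ℂ) = ((y.coeff (θ k) : ℤ) : ℂ) := by
    intro k
    rw [hvdef]
    simp only
    rw [← Int.cast_natCast, Int.toNat_of_nonneg (hy (θ k))]
  -- support cards
  have hsuppu : (Finset.univ.filter fun k : ZMod m => u k ≠ 0).card = x.coeff.support.card := by
    apply Finset.card_bij (fun k _ => θ k)
    · intro k hk
      have h5 := (Finset.mem_filter.1 hk).2
      rw [Finsupp.mem_support_iff]
      intro h6
      apply h5
      rw [hudef]; simp only [h6]; rfl
    · intro k1 _ k2 _ hk; exact hinj hk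
    · intro a ha
      obtain ⟨k, hk⟩ := hsurj a
      refine ⟨k, Finset.mem_filter.2 ⟨Finset.mem_univ _, ?_⟩, hk⟩
      rw [hudef]
      simp only
      rw [hk]
      have h7 := Finsupp.mem_support_iff.1 ha
      have h8 := hx a
      omega
  have hsuppv : (Finset.univ.filter fun k : ZMod m => v k ≠ 0).card = y.coeff.support.card := by
    apply Finset.card_bij (fun k _ => θ k)
    · intro k hk
      have h5 := (Finset.mem_filter.1 hk).2
      rw [Finsupp.mem_support_iff]
      intro h6
      apply h5
      rw [hvdef]; simp only [h6]; rfl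
    · intro k1 _ k2 _ hk; exact hinj hk
    · intro a ha
      obtain ⟨k, hk⟩ := hsurj a
      refine ⟨k, Finset.mem_filter.2 ⟨Finset.mem_univ _, ?_⟩, hk⟩
      rw [hvdef]
      simp only
      rw [hk]
      have h7 := Finsupp.mem_support_iff.1 ha
      have h8 := hy a
      omega
  -- every prime divisor of m is at least p 0
  set p₁ : ℕ := p ⟨0, by omega⟩ with hp₁def
  have hp₁ : p₁.Prime := hp _
  have hqge : ∀ q : ℕ, q.Prime → q ∣ m → p₁ ≤ q := by
    intro q hq hqd
    rw [hprod] at hqd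
    have h9 : ∃ i ∈ (Finset.univ : Finset (Fin r)), q ∣ p i := by
      exact hq.prime.exists_mem_finset_dvd hqd
    obtain ⟨i, _, hdvd⟩ := h9
    have h10 : q = p i := ((Nat.prime_dvd_prime_iff_eq hq (hp i)).1 hdvd)
    rw [h10, hp₁def]
    exact hmono.monotone (by simp [Fin.le_def])
  -- range-form conversion
  have SR : ∀ w : ZMod m → ℕ,
      ∑ j ∈ Finset.range m, ((w ((j : ZMod m)) : ℕ) : ℂ) * ζ ^ j
        = ∑ k : ZMod m, ((w k : ℕ) : ℂ) * ζ ^ k.val := by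
    intro w
    rw [zmod_sum_range m (fun k => ((w k : ℕ) : ℂ) * ζ ^ k.val)]
    apply Finset.sum_congr rfl
    intro j hj
    rw [ZMod.val_natCast_of_lt (Finset.mem_range.1 hj)]
  have hfilter : ∀ w : ZMod m → ℕ,
      ((Finset.range m).filter fun j : ℕ => w ((j : ZMod m)) ≠ 0).card
        = (Finset.univ.filter fun k : ZMod m => w k ≠ 0).card := by
    intro w
    apply Finset.card_bij (fun j _ => ((j : ℕ) : ZMod m))
    · intro a ha
      simp only [Finset.mem_filter, Finset.mem_univ, true_and]
      exact (Finset.mem_filter.1 ha).2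
    · intro a ha b hb hab
      have ha' := Finset.mem_range.1 (Finset.mem_filter.1 ha).1
      have hb' := Finset.mem_range.1 (Finset.mem_filter.1 hb).1
      rw [← ZMod.val_natCast_of_lt ha', ← ZMod.val_natCast_of_lt hb', hab]
    · intro b hb
      refine ⟨b.val, Finset.mem_filter.2 ⟨Finset.mem_range.2 b.val_lt, ?_⟩, ZMod.natCast_zmod_val b⟩
      rw [ZMod.natCast_zmod_val b]
      exact (Finset.mem_filter.1 hb).2
  -- apply core
  have hcoreu : ∀ q : ℕ, q.Prime → q ∣ m →
      ((Finset.range m).filter fun j : ℕ => u ((j : ZMod m)) ≠ 0).card < q := by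
    intro q hq hqd
    rw [hfilter u, hsuppu]
    have := hqge q hq hqd
    have := hp₁.two_le
    omega
  have hcorev : ∀ q : ℕ, q.Prime → q ∣ m →
      ((Finset.range m).filter fun j : ℕ => v ((j : ZMod m)) ≠ 0).card < q := by
    intro q hq hqd
    rw [hfilter v, hsuppv, ← hcard]
    have := hqge q hq hqd
    have := hp₁.two_le
    omega
  have hcsum : ∑ j ∈ Finset.range m, ((u ((j : ZMod m)) : ℕ) : ℂ) * ζ ^ j
      = ∑ j ∈ Finset.range m, ((v ((j : ZMod m)) : ℕ) : ℂ) * ζ ^ j := by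
    rw [SR u, SR v]
    have h11 : ∑ k : ZMod m, ((u k : ℕ) : ℂ) * ζ ^ k.val = φ x := by
      rw [hφeval x]
      exact Finset.sum_congr rfl (fun k _ => by rw [hucast k])
    have h12 : ∑ k : ZMod m, ((v k : ℕ) : ℂ) * ζ ^ k.val = φ y := by
      rw [hφeval y]
      exact Finset.sum_congr rfl (fun k _ => by rw [hvcast k])
    rw [h11, h12, hφxy]
  have huv : u = v := core m hmp hsf ζ hζ u v hcoreu hcorev hcsum
  -- conclude
  ext a
  obtain ⟨k, hk⟩ := hsurj a
  have h13 : u k = v k := congrFun huv k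
  rw [hudef, hvdef] at h13
  simp only at h13
  rw [← hk, ← Int.toNat_of_nonneg (hx (θ k)), ← Int.toNat_of_nonneg (hy (θ k)), h13]
end
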